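/- arXiv:math/0505073 — 4 statements merged into one kernel-verified Lean document; each statement's English description precedes it below -/
import Mathlib

section
/- Let H:[-ε,ε]→R^r be a C^∞ solution of x^{p+1} H' = A(x,H) with A analytic, A(0,0)=0, and suppose S_H is quasi-analytic. Then the algebra S_H of simple functions relative to H is closed under division by x: if φ ∈ S_H and φ(0)=0 then the germ x ↦ φ(x)/x belongs to S_H. -/
open Filter Topology
open scoped NNReal ENNReal

set_option maxHeartbeats 1000000
set_option linter.unusedVariables false


open Set

/-- The `k`-jet at `0` of a function `F`, computed with derivatives within `s`. -/
noncomputable def jetWithin (F : ℝ → ℝ) (s : Set ℝ) (k : ℕ) (x : ℝ) : ℝ :=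
  ∑ i ∈ Finset.range (k+1), (iteratedDerivWithin i F s 0 / i.factorial) * x ^ i

/-- `T_k F (x) = (F x - J_k F x) / x^k`, extended by `0` at `x = 0`. -/
noncomputable def TkWithin (F : ℝ → ℝ) (s : Set ℝ) (k : ℕ) (x : ℝ) : ℝ :=
  if x = 0 then 0 else (F x - jetWithin F s k x) / x ^ k

/-- A germ at `0` is a *simple function* relative to `H : [-ε,ε] → ℝʳ` if it is of the
form `x ↦ f(x, {T_k H_j (P_l (x))}_{j,l})` with `f` analytic at `0`, `f` real analytic,
and `P_l` polynomials vanishing at `0`. -/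
def IsSimple (r : ℕ) (H : ℝ → Fin r → ℝ) (ε : ℝ) (φ : ℝ → ℝ) : Prop :=
  ∃ (n k : ℕ) (f : ℝ × (Fin r → Fin n → ℝ) → ℝ) (P : Fin n → Polynomial ℝ),
    AnalyticAt ℝ f 0 ∧ (∀ l, (P l).eval 0 = 0) ∧
    ∀ᶠ x in nhds (0:ℝ), φ x =
      f (x, fun j l => TkWithin (fun t => H t j) (Icc (-ε) ε) k ((P l).eval x))

lemma Tk_succ (F : ℝ → ℝ) (s : Set ℝ) (k : ℕ) (y : ℝ) :
    TkWithin F s k y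
      = y * (TkWithin F s (k+1) y + iteratedDerivWithin (k+1) F s 0 / (k+1).factorial) := by
  rcases eq_or_ne y 0 with rfl | hy
  · simp [TkWithin]
  · have hjet : jetWithin F s (k+1) y
        = jetWithin F s k y + (iteratedDerivWithin (k+1) F s 0 / (k+1).factorial) * y ^ (k+1) := by
      simp [jetWithin, Finset.sum_range_succ]
    simp only [TkWithin, if_neg hy, hjet]
    have hyk : (y : ℝ) ^ k ≠ 0 := pow_ne_zero _ hy
    have hyk1 : (y : ℝ) ^ (k+1) ≠ 0 := pow_ne_zero _ hy
    field_simp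
    ring

lemma taylor_quot_tendsto :
    ∀ (k : ℕ) (f : ℝ → ℝ) (U : Set ℝ), IsOpen U → (0:ℝ) ∈ U → ContDiffOn ℝ (⊤ : ℕ∞) f U →
    Tendsto (fun y => (f y - ∑ i ∈ Finset.range (k+1),
        (iteratedDeriv i f 0 / i.factorial) * y ^ i) / y ^ k) (𝓝[≠] (0:ℝ)) (𝓝 0) := by
  intro k
  induction k with
  | zero =>
    intro f U hU h0U hf
    have hc : ContinuousAt f 0 := (hf.contDiffAt (hU.mem_nhds h0U)).continuousAt
    have : Tendsto (fun y => f y - f 0) (𝓝 (0:ℝ)) (𝓝 (f 0 - f 0)) :=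
      hc.tendsto.sub tendsto_const_nhds
    rw [sub_self] at this
    refine (this.mono_left nhdsWithin_le_nhds).congr (fun y => ?_)
    simp [Finset.sum_range_one, iteratedDeriv_zero]
  | succ k ih =>
    intro f U hU h0U hf
    have hUn : U ∈ 𝓝 (0:ℝ) := hU.mem_nhds h0U
    have hf' : ContDiffOn ℝ (⊤ : ℕ∞) (deriv f) U := hf.deriv_of_isOpen hU (by simp)
    have hdiff : ∀ᶠ y in 𝓝 (0:ℝ), DifferentiableAt ℝ f y := by
      filter_upwards [hUn] with y hy
      exact (hf.contDiffAt (hU.mem_nhds hy)).differentiableAt (by simp)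
    -- derivative of the numerator
    have hderivnum : ∀ᶠ y in 𝓝 (0:ℝ),
        deriv (fun y => f y - ∑ i ∈ Finset.range (k+2),
          (iteratedDeriv i f 0 / i.factorial) * y ^ i) y
        = deriv f y - ∑ i ∈ Finset.range (k+1),
            (iteratedDeriv i (deriv f) 0 / i.factorial) * y ^ i := by
      filter_upwards [hdiff] with y hy
      have hpoly : HasDerivAt (fun y : ℝ => ∑ i ∈ Finset.range (k+2),
          (iteratedDeriv i f 0 / i.factorial) * y ^ i)
          (∑ i ∈ Finset.range (k+1), (iteratedDeriv i (deriv f) 0 / i.factorial) * y ^ i) y := by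
        have : HasDerivAt (fun y : ℝ => ∑ i ∈ Finset.range (k+2),
            (iteratedDeriv i f 0 / i.factorial) * y ^ i)
            (∑ i ∈ Finset.range (k+2), (iteratedDeriv i f 0 / i.factorial) * (i * y ^ (i-1))) y := by
          apply HasDerivAt.fun_sum
          intro i _
          exact (hasDerivAt_pow i y).const_mul _
        convert this using 1
        rw [Finset.sum_range_succ' (fun i => (iteratedDeriv i f 0 / i.factorial) * (i * y ^ (i-1)))]
        simp only [Nat.cast_zero, zero_mul, mul_zero, add_zero]
        apply Finset.sum_congr rfl
        intro i _
        rw [← iteratedDeriv_succ']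
        have : ((i+1).factorial : ℝ) = (i+1) * i.factorial := by
          rw [Nat.factorial_succ]; push_cast; ring
        rw [this]
        have h1 : (i.factorial : ℝ) ≠ 0 := Nat.cast_ne_zero.2 (Nat.factorial_ne_zero i)
        have h2 : ((i:ℝ)+1) ≠ 0 := by positivity
        field_simp
        rw [Nat.add_sub_cancel]; push_cast
        ring
      rw [deriv_fun_sub hy hpoly.differentiableAt, hpoly.deriv]
    have ihd := ih (deriv f) U hU h0U hf'
    apply deriv.lhopital_zero_nhdsNE
    · apply eventually_nhdsWithin_of_eventually_nhds
      filter_upwards [hdiff] with y hy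
      exact hy.sub (by
        apply DifferentiableAt.fun_sum
        intro i _
        exact ((differentiableAt_pow i).const_mul _))
    · filter_upwards [self_mem_nhdsWithin] with y hy
      rw [deriv_pow_field]
      have hy0 : (y:ℝ) ≠ 0 := hy
      positivity
    · -- hfa
      have hc : ContinuousAt f 0 := (hf.contDiffAt hUn).continuousAt
      have hps : ContinuousAt (fun y : ℝ => ∑ i ∈ Finset.range (k+1+1),
          (iteratedDeriv i f 0 / i.factorial) * y ^ i) 0 :=
        Continuous.continuousAt (by continuity)
      have htd := (hc.sub hps).tendsto
      have hval : f 0 - ∑ i ∈ Finset.range (k+1+1),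
          (iteratedDeriv i f 0 / i.factorial) * (0:ℝ) ^ i = 0 := by
        rw [Finset.sum_range_succ']
        simp [iteratedDeriv_zero]
      simp only [Pi.sub_apply, hval] at htd
      exact htd.mono_left nhdsWithin_le_nhds
    · simpa using ((continuous_pow (k+1)).tendsto (0:ℝ)).mono_left (nhdsWithin_le_nhds (s := {(0:ℝ)}ᶜ))
    · -- hdiv
      have h2 : Tendsto (fun y => ((k:ℝ)+1)⁻¹ * ((deriv f y - ∑ i ∈ Finset.range (k+1),
          (iteratedDeriv i (deriv f) 0 / i.factorial) * y ^ i) / y ^ k)) (𝓝[≠] (0:ℝ)) (𝓝 0) := by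
        simpa using ihd.const_mul ((k:ℝ)+1)⁻¹
      apply Filter.Tendsto.congr' _ h2
      filter_upwards [eventually_nhdsWithin_of_eventually_nhds hderivnum, self_mem_nhdsWithin]
        with y hd hy
      have hy0 : (y:ℝ) ≠ 0 := hy
      rw [hd, deriv_pow_field]
      have h1 : ((k:ℝ)+1) ≠ 0 := by positivity
      have h3 : (y:ℝ) ^ k ≠ 0 := pow_ne_zero _ hy0
      simp only [Nat.add_sub_cancel]
      field_simp
      push_cast; ring

lemma tendsto_TkWithin {ε : ℝ} (hε : 0 < ε) {f : ℝ → ℝ}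
    (hf : ContDiffOn ℝ (⊤ : ℕ∞) f (Icc (-ε) ε)) (k : ℕ) :
    Tendsto (TkWithin f (Icc (-ε) ε) k) (𝓝 (0:ℝ)) (𝓝 0) := by
  have hmem : Icc (-ε) ε ∈ 𝓝 (0:ℝ) := Icc_mem_nhds (by linarith) hε
  have hset : Icc (-ε) ε =ᶠ[𝓝 (0:ℝ)] (univ : Set ℝ) := by
    filter_upwards [hmem] with x hx
    exact propext ⟨fun _ => trivial, fun _ => hx⟩
  have hconv : ∀ i, iteratedDerivWithin i f (Icc (-ε) ε) 0 = iteratedDeriv i f 0 := by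
    intro i
    rw [iteratedDerivWithin_eq_iteratedFDerivWithin, iteratedDeriv_eq_iteratedFDeriv,
      iteratedFDerivWithin_congr_set hset, iteratedFDerivWithin_univ]
  have ht := taylor_quot_tendsto k f (Ioo (-ε) ε) isOpen_Ioo (by constructor <;> linarith)
    (hf.mono Ioo_subset_Icc_self)
  have hsplit : 𝓝 (0:ℝ) = 𝓝[≠] (0:ℝ) ⊔ pure 0 := (nhdsNE_sup_pure 0).symm
  nth_rewrite 1 [hsplit]
  rw [tendsto_sup]
  constructor
  · apply Filter.Tendsto.congr' _ ht
    filter_upwards [self_mem_nhdsWithin] with y hy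
    have hy0 : (y:ℝ) ≠ 0 := hy
    simp only [TkWithin, if_neg hy0, jetWithin]
    congr 2
    exact Finset.sum_congr rfl fun i _ => by rw [hconv]
  · intro u hu
    have h0 : TkWithin f (Icc (-ε) ε) k 0 = 0 := by simp [TkWithin]
    simpa [Filter.mem_map, h0] using mem_of_mem_nhds hu

variable {E : Type*} [NormedAddCommGroup E] [NormedSpace ℝ E]

lemma div_slice {g : ℝ × E → ℝ}
    (hg : AnalyticAt ℝ g 0) (h0 : ∀ u : E, g (0, u) = 0) :
    ∃ F : ℝ × E → ℝ, AnalyticAt ℝ F 0 ∧ ∀ᶠ y in 𝓝 (0 : ℝ × E), g y = y.1 * F y := by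
  classical
  obtain ⟨p, hp⟩ := hg
  obtain ⟨ρ, hpb⟩ := hp
  obtain ⟨r₁, hr₁0, hr₁ρ⟩ : ∃ r₁ : ℝ≥0, 0 < r₁ ∧ (r₁ : ℝ≥0∞) < ρ := by
    rcases ENNReal.lt_iff_exists_nnreal_btwn.1 hpb.r_pos with ⟨r, hr0, hrρ⟩
    exact ⟨r, by exact_mod_cast hr0, hrρ⟩
  obtain ⟨C, hC0, hC⟩ := p.norm_mul_pow_le_of_lt_radius (lt_of_lt_of_le hr₁ρ hpb.r_le)
  -- symmetrized coefficients
  set q : ∀ m, ContinuousMultilinearMap ℝ (fun _ : Fin m => ℝ × E) ℝ :=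
    fun m => ((m.factorial : ℝ))⁻¹ • ∑ σ : Equiv.Perm (Fin m), (p m).domDomCongr σ with hq
  -- diagonal values agree
  have hdiag : ∀ m (y : ℝ × E), q m (fun _ => y) = p m (fun _ => y) := by
    intro m y
    simp only [hq, ContinuousMultilinearMap.smul_apply, ContinuousMultilinearMap.sum_apply,
      ContinuousMultilinearMap.domDomCongr_apply]
    rw [Finset.sum_const]
    simp only [Finset.card_univ, Fintype.card_perm, Fintype.card_fin, nsmul_eq_mul, smul_eq_mul]
    exact inv_mul_cancel_left₀ ((Nat.cast_ne_zero (R := ℝ)).2 (Nat.factorial_ne_zero m)) _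
  -- symmetry
  have hsymm : ∀ m (w : Fin m → ℝ × E) (σ : Equiv.Perm (Fin m)),
      q m (fun i => w (σ i)) = q m w := by
    intro m w σ
    simp only [hq, ContinuousMultilinearMap.smul_apply, ContinuousMultilinearMap.sum_apply,
      ContinuousMultilinearMap.domDomCongr_apply]
    congr 1
    exact Fintype.sum_equiv (Equiv.mulLeft σ) _ _ (fun τ => rfl)
  -- norm bound for q
  have hqnorm : ∀ m, ‖q m‖ ≤ ‖p m‖ := by
    intro m
    have hqm : q m = ((m.factorial : ℝ))⁻¹ • ∑ σ : Equiv.Perm (Fin m), (p m).domDomCongr σ := by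
      rw [hq]
    have hfac : (0:ℝ) < (m.factorial : ℝ) := by positivity
    refine ContinuousMultilinearMap.opNorm_le_bound (norm_nonneg _) (fun v => ?_)
    have h2 : ‖(q m) v‖ ≤ (m.factorial:ℝ)⁻¹ * ∑ σ : Equiv.Perm (Fin m), ‖p m (fun i => v (σ i))‖ := by
      rw [hqm]
      simp only [ContinuousMultilinearMap.smul_apply, ContinuousMultilinearMap.sum_apply,
        ContinuousMultilinearMap.domDomCongr_apply, smul_eq_mul]
      rw [norm_mul, norm_inv, Real.norm_natCast]
      exact mul_le_mul_of_nonneg_left (norm_sum_le _ _) (by positivity)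
    refine h2.trans ?_
    have hterm : ∀ σ : Equiv.Perm (Fin m), ‖p m (fun i => v (σ i))‖ ≤ ‖p m‖ * ∏ i, ‖v i‖ := by
      intro σ
      refine ((p m).le_opNorm _).trans (le_of_eq ?_)
      rw [Equiv.prod_comp σ (fun i => ‖v i‖)]
    refine le_trans (mul_le_mul_of_nonneg_left
      (Finset.sum_le_sum (fun σ _ => hterm σ)) (by positivity)) ?_
    rw [Finset.sum_const, Finset.card_univ, Fintype.card_perm, Fintype.card_fin]
    simp only [nsmul_eq_mul]
    rw [← mul_assoc, inv_mul_cancel₀ (ne_of_gt hfac), one_mul]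
  -- `p` vanishes on the slice t = 0
  have hinr : ‖(ContinuousLinearMap.inr ℝ ℝ E)‖ ≤ 1 := by
    refine ContinuousLinearMap.opNorm_le_bound _ zero_le_one (fun u => ?_)
    rw [one_mul]
    have : ‖((0:ℝ), u)‖ = ‖u‖ := by
      rw [Prod.norm_def]
      simp
    simpa [ContinuousLinearMap.inr_apply] using le_of_eq this
  set qE : FormalMultilinearSeries ℝ E ℝ :=
    fun m => (p m).compContinuousLinearMap (fun _ => ContinuousLinearMap.inr ℝ ℝ E) with hqEdef
  have hqE : ∀ m, ‖qE m‖ ≤ ‖p m‖ := by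
    intro m
    refine le_trans ((p m).norm_compContinuousLinearMap_le _) ?_
    have : ∏ _i : Fin m, ‖(ContinuousLinearMap.inr ℝ ℝ E)‖ ≤ 1 := by
      refine Finset.prod_le_one (fun _ _ => norm_nonneg _) (fun _ _ => hinr)
    calc ‖p m‖ * ∏ _i : Fin m, ‖(ContinuousLinearMap.inr ℝ ℝ E)‖
        ≤ ‖p m‖ * 1 := mul_le_mul_of_nonneg_left this (norm_nonneg _)
      _ = ‖p m‖ := mul_one _
  have hball : HasFPowerSeriesOnBall (0 : E → ℝ) qE 0 (r₁ : ℝ≥0∞) := by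
    constructor
    · apply qE.le_radius_of_bound C
      intro n
      exact le_trans (mul_le_mul_of_nonneg_right (hqE n) (by positivity)) (hC n)
    · exact_mod_cast hr₁0
    · intro u hu
      have hmem : ((0:ℝ), u) ∈ EMetric.ball (0 : ℝ × E) ρ := by
        show edist ((0:ℝ), u) (0 : ℝ × E) < ρ
        have h1 : edist ((0:ℝ), u) (0 : ℝ × E) = edist u 0 := by
          rw [Prod.edist_eq]
          simp
        rw [h1]
        exact lt_trans hu hr₁ρ
      have hs := hpb.hasSum hmem
      rw [zero_add, h0 u] at hs
      have : (fun n => qE n (fun _ => u)) = (fun n => p n (fun _ => ((0:ℝ), u))) := by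
        funext n
        rw [hqEdef]
        rfl
      simpa [this] using hs
  have key1 : ∀ m (u : E), p m (fun _ => ((0:ℝ), u)) = 0 := by
    intro m u
    have h := HasFPowerSeriesAt.apply_eq_zero ⟨(r₁ : ℝ≥0∞), hball⟩ m u
    calc p m (fun _ => ((0:ℝ), u)) = qE m (fun _ => u) := by rw [hqEdef]; rfl
      _ = 0 := h
  -- the shifted (quotient) series
  set e : ℝ × E := ((1:ℝ), (0:E)) with he
  set pr : (ℝ × E) →L[ℝ] (ℝ × E) :=
    (ContinuousLinearMap.inr ℝ ℝ E).comp (ContinuousLinearMap.snd ℝ ℝ E) with hpr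
  have hpr_apply : ∀ z : ℝ × E, pr z = ((0:ℝ), z.2) := fun z => rfl
  set D : ∀ m : ℕ, ℕ → ContinuousMultilinearMap ℝ (fun _ : Fin m => ℝ × E) ℝ :=
    fun m i => ((q (m+1)).curryLeft e).compContinuousLinearMap
      (fun j => if (j : ℕ) < i then ContinuousLinearMap.id ℝ (ℝ × E) else pr) with hD
  have hDapply : ∀ (m i : ℕ) (v : Fin m → ℝ × E),
      D m i v = q (m+1) (Fin.cons e (fun j : Fin m =>
        if (j : ℕ) < i then v j else ((0:ℝ), (v j).2))) := by
    intro m i v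
    rw [hD]
    simp only [ContinuousMultilinearMap.compContinuousLinearMap_apply,
      ContinuousMultilinearMap.curryLeft_apply]
    have hj : ∀ j : Fin m, (if (j : ℕ) < i then ContinuousLinearMap.id ℝ (ℝ × E) else pr) (v j)
        = if (j : ℕ) < i then v j else ((0:ℝ), (v j).2) := by
      intro j
      by_cases hj : (j : ℕ) < i
      · rw [if_pos hj, if_pos hj]
        rfl
      · rw [if_neg hj, if_neg hj]
        exact hpr_apply _
    exact congrArg (fun A : Fin m → ℝ × E => q (m+1) (Fin.cons e A)) (funext hj)
  have hDnorm : ∀ (m i : ℕ), ‖D m i‖ ≤ ‖p (m+1)‖ := by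
    intro m i
    refine ContinuousMultilinearMap.opNorm_le_bound (norm_nonneg _) (fun v => ?_)
    rw [hDapply]
    have h1 := (q (m+1)).le_opNorm (Fin.cons e (fun j : Fin m =>
      if (j : ℕ) < i then v j else ((0:ℝ), (v j).2)))
    have he1 : ‖e‖ = 1 := by
      rw [he, Prod.norm_def]
      simp
    have h2 : ∏ j : Fin (m+1), ‖(Fin.cons e (fun j : Fin m =>
        if (j : ℕ) < i then v j else ((0:ℝ), (v j).2)) : Fin (m+1) → ℝ × E) j‖
        ≤ ∏ j : Fin m, ‖v j‖ := by
      rw [Fin.prod_univ_succ]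
      simp only [Fin.cons_zero, Fin.cons_succ, he1, one_mul]
      refine Finset.prod_le_prod (fun _ _ => norm_nonneg _) (fun j _ => ?_)
      by_cases hj : (j : ℕ) < i
      · simp [hj]
      · simp only [hj, if_false]
        have : ‖((0:ℝ), (v j).2)‖ = ‖(v j).2‖ := by
          rw [Prod.norm_def]
          simp
        rw [this]
        exact norm_snd_le _
    calc ‖q (m+1) _‖ ≤ ‖q (m+1)‖ * ∏ j : Fin (m+1), ‖(Fin.cons e (fun j : Fin m =>
          if (j : ℕ) < i then v j else ((0:ℝ), (v j).2)) : Fin (m+1) → ℝ × E) j‖ := h1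
      _ ≤ ‖p (m+1)‖ * ∏ j : Fin m, ‖v j‖ := by
          apply mul_le_mul (hqnorm (m+1)) h2 (Finset.prod_nonneg (fun _ _ => norm_nonneg _))
            (norm_nonneg _)
  set Q : FormalMultilinearSeries ℝ (ℝ × E) ℝ :=
    fun m => ∑ i ∈ Finset.range (m+1), D m i with hQdef
  have hQnorm : ∀ m, ‖Q m‖ ≤ ((m:ℝ)+1) * ‖p (m+1)‖ := by
    intro m
    have h1 : Q m = ∑ i ∈ Finset.range (m+1), D m i := by rw [hQdef]
    rw [h1]
    refine le_trans (norm_sum_le _ _) ?_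
    refine le_trans (Finset.sum_le_sum (fun i _ => hDnorm m i)) ?_
    rw [Finset.sum_const, Finset.card_range]
    simp [nsmul_eq_mul]
  have hr₁R : (0:ℝ) < (r₁:ℝ) := hr₁0
  have keyC : ∀ n : ℕ, ‖p (n+1)‖ * (r₁:ℝ)^n ≤ C / (r₁:ℝ) := by
    intro n
    rw [le_div_iff₀ hr₁R]
    calc ‖p (n+1)‖ * (r₁:ℝ)^n * (r₁:ℝ) = ‖p (n+1)‖ * (r₁:ℝ)^(n+1) := by ring
      _ ≤ C := hC (n+1)
  have hQrad : 0 < Q.radius := by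
    have hb : ∀ n : ℕ, ‖Q n‖ * ((r₁/2 : ℝ≥0) : ℝ) ^ n ≤ 2 * (C / (r₁:ℝ)) := by
      intro n
      have hcast : ((r₁/2 : ℝ≥0) : ℝ) = (r₁:ℝ) / 2 := by push_cast; ring
      rw [hcast, div_pow]
      have h1 : ‖Q n‖ * ((r₁:ℝ)^n / 2^n) ≤ (((n:ℝ)+1) * ‖p (n+1)‖) * ((r₁:ℝ)^n / 2^n) :=
        mul_le_mul_of_nonneg_right (hQnorm n) (by positivity)
      refine h1.trans ?_
      have h2 : ((n:ℝ)+1) ≤ 2 * 2^n := by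
        have h3 : (n:ℕ) < 2^n := Nat.lt_two_pow_self
        have h4 : ((n:ℝ)) + 1 ≤ 2^n := by
          have : (n:ℕ) + 1 ≤ 2^n := h3
          exact_mod_cast this
        have h5 : (0:ℝ) ≤ 2^n := by positivity
        linarith
      calc (((n:ℝ)+1) * ‖p (n+1)‖) * ((r₁:ℝ)^n / 2^n)
          = (((n:ℝ)+1) / 2^n) * (‖p (n+1)‖ * (r₁:ℝ)^n) := by ring
        _ ≤ 2 * (C / (r₁:ℝ)) := by
            refine mul_le_mul ?_ (keyC n) ?_ (by norm_num)
            · rw [div_le_iff₀ (by positivity)]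
              linarith [h2]
            · positivity
    have hle : ((r₁/2 : ℝ≥0) : ℝ≥0∞) ≤ Q.radius := Q.le_radius_of_bound _ hb
    refine lt_of_lt_of_le ?_ hle
    rw [ENNReal.coe_pos]
    positivity
  have hQball := Q.hasFPowerSeriesOnBall hQrad
  have hρ'0 : 0 < min ρ Q.radius := lt_min hpb.r_pos hQrad
  refine ⟨Q.sum, hQball.analyticAt, ?_⟩
  filter_upwards [EMetric.ball_mem_nhds (0 : ℝ × E) hρ'0] with y hy
  have hyρ : y ∈ EMetric.ball (0 : ℝ × E) ρ := EMetric.ball_subset_ball (min_le_left _ _) hy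
  have hyQ : y ∈ EMetric.ball (0 : ℝ × E) Q.radius :=
    EMetric.ball_subset_ball (min_le_right _ _) hy
  have hsq : HasSum (fun m => Q m (fun _ => y)) (Q.sum y) := by
    have := hQball.hasSum hyQ
    rwa [zero_add] at this
  have hsp : HasSum (fun m => p m (fun _ => y)) (g y) := by
    have := hpb.hasSum hyρ
    rwa [zero_add] at this
  have htele : ∀ m : ℕ, y.1 * Q m (fun _ => y) = p (m+1) (fun _ => y) := by
    intro m
    set w : ℝ × E := ((0:ℝ), y.2) with hw
    set G : ℕ → ℝ := fun i => q (m+1) (fun j : Fin (m+1) => if (j:ℕ) < i then y else w) with hG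
    have hstep : ∀ i ∈ Finset.range (m+1), y.1 * D m i (fun _ => y) = G (i+1) - G i := by
      intro i hi
      rw [Finset.mem_range] at hi
      set ii : Fin (m+1) := ⟨i, hi⟩ with hii
      set v : Fin (m+1) → ℝ × E := fun j => if (j:ℕ) < i then y else w with hv
      have ha : D m i (fun _ => y)
          = q (m+1) (Fin.cons e (fun j : Fin m => if (j:ℕ) < i then y else w)) := by
        rw [hDapply]
      have hb : q (m+1) (Fin.cons e (fun j : Fin m => if (j:ℕ) < i then y else w))
          = q (m+1) (Function.update v ii e) := by
        have hfun : (fun idx : Fin (m+1) => (Function.update v ii e) ((ii.cycleRange)⁻¹ idx))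
            = Fin.cons e (fun j : Fin m => if (j:ℕ) < i then y else w) := by
          funext idx
          refine Fin.cases ?_ ?_ idx
          · have h1 : (ii.cycleRange)⁻¹ 0 = ii := by
              rw [Equiv.Perm.inv_def, Equiv.symm_apply_eq]
              exact (Fin.cycleRange_self ii).symm
            rw [h1, Fin.cons_zero, Function.update_self]
          · intro j
            rw [Fin.cons_succ]
            by_cases hj : (j:ℕ) < i
            · have hlt : j.castSucc < ii := by
                rw [Fin.lt_def]
                simpa using hj
              have h1 : (ii.cycleRange)⁻¹ j.succ = j.castSucc := by
                rw [Equiv.Perm.inv_def, Equiv.symm_apply_eq]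
                rw [Fin.cycleRange_of_lt hlt, Fin.coeSucc_eq_succ]
              rw [h1, Function.update_of_ne (ne_of_lt hlt), hv]
              simp [hj]
            · have hgt : ii < j.succ := by
                rw [Fin.lt_def]
                simp only [Fin.val_succ]
                show i < (j:ℕ) + 1
                omega
              have h1 : (ii.cycleRange)⁻¹ j.succ = j.succ := by
                rw [Equiv.Perm.inv_def, Equiv.symm_apply_eq]
                exact (Fin.cycleRange_of_gt hgt).symm
              have hnotlt : ¬ ((j.succ : Fin (m+1)) : ℕ) < i := by
                simp only [Fin.val_succ]
                omega
              rw [h1, Function.update_of_ne (ne_of_gt hgt), hv]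
              simp only [hnotlt, if_false, hj]
        calc q (m+1) (Fin.cons e (fun j : Fin m => if (j:ℕ) < i then y else w))
            = q (m+1) (fun idx => (Function.update v ii e) ((ii.cycleRange)⁻¹ idx)) := by
              rw [hfun]
          _ = q (m+1) (Function.update v ii e) := hsymm (m+1) _ _
      have hsmul : y.1 • e = y - w := by
        rw [he, hw]
        ext
        · simp
        · simp
      have hd2 : q (m+1) (Function.update v ii (y - w))
          = y.1 * q (m+1) (Function.update v ii e) := by
        rw [← hsmul, ContinuousMultilinearMap.map_update_smul, smul_eq_mul]
      have he2 : q (m+1) (Function.update v ii (y - w))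
          = q (m+1) (Function.update v ii y) - q (m+1) (Function.update v ii w) :=
        ContinuousMultilinearMap.map_update_sub _ _ _ _ _
      have hupy : Function.update v ii y = fun j : Fin (m+1) => if (j:ℕ) < i+1 then y else w := by
        funext j
        beta_reduce
        rcases eq_or_ne j ii with rfl | hne
        · rw [Function.update_self]
          have h8 : ((ii : Fin (m+1)) : ℕ) < i + 1 := Nat.lt_succ_self i
          rw [if_pos h8]
        · rw [Function.update_of_ne hne]
          simp only [hv]
          have hvne : (j:ℕ) ≠ i := fun h => hne (Fin.ext h)
          by_cases h2 : (j:ℕ) < i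
          · rw [if_pos h2, if_pos (by omega)]
          · rw [if_neg h2, if_neg (by omega)]
      have hupw : Function.update v ii w = v := by
        funext j
        rcases eq_or_ne j ii with rfl | hne
        · rw [Function.update_self]
          simp only [hv]
          have h9 : ¬ ((ii : Fin (m+1)) : ℕ) < i := Nat.lt_irrefl i
          rw [if_neg h9]
        · rw [Function.update_of_ne hne]
      rw [ha, hb, ← hd2, he2, hupy, hupw]
    have hsum : y.1 * Q m (fun _ => y) = ∑ i ∈ Finset.range (m+1), (G (i+1) - G i) := by
      have hqa : Q m (fun _ => y) = ∑ i ∈ Finset.range (m+1), D m i (fun _ => y) := by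
        rw [hQdef]
        exact ContinuousMultilinearMap.sum_apply _ _ _
      rw [hqa, Finset.mul_sum]
      exact Finset.sum_congr rfl hstep
    rw [hsum, Finset.sum_range_sub]
    have hGtop : G (m+1) = p (m+1) (fun _ => y) := by
      simp only [hG]
      have h5 : (fun j : Fin (m+1) => if (j:ℕ) < m+1 then y else w) = fun _ => y := by
        funext j
        rw [if_pos j.isLt]
      rw [h5, hdiag]
    have hG0 : G 0 = 0 := by
      simp only [hG]
      have h6 : (fun j : Fin (m+1) => if (j:ℕ) < 0 then y else w) = fun _ => w := by
        funext j
        rw [if_neg (Nat.not_lt_zero _)]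
      rw [h6, hdiag, hw]
      exact key1 (m+1) y.2
    rw [hGtop, hG0, sub_zero]
  have hshift : HasSum (fun m => p (m+1) (fun _ => y)) (y.1 * Q.sum y) := by
    have h1 := hsq.mul_left y.1
    simp only [htele] at h1
    exact h1
  have hp0 : p 0 (fun _ => y) = 0 := by
    have h7 : (fun _ : Fin 0 => y) = (fun _ : Fin 0 => ((0:ℝ), (0:E))) :=
      funext (fun x => x.elim0)
    rw [h7]
    exact key1 0 0
  have hfull : HasSum (fun m => p m (fun _ => y))
      (y.1 * Q.sum y + ∑ i ∈ Finset.range 1, p i (fun _ => y)) := by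
    apply (hasSum_nat_add_iff' 1).1
    simpa using hshift
  rw [Finset.sum_range_one, hp0, add_zero] at hfull
  exact hsp.unique hfull


/-- **monomial division in `S_H`.** Let `H : [-ε,ε] → ℝʳ` be a `C^∞`
solution of `x^(p+1) H' = A(x,H)` with `A` analytic, `A(0,0)=0`, and suppose the
algebra `S_H` of simple functions relative to `H` is quasi-analytic.  If `φ ∈ S_H`
and `φ(0) = 0`, then the germ `x ↦ φ(x)/x` belongs to `S_H`: there is a simple
function `ψ` with `ψ(x) = φ(x)/x` for all `x ≠ 0` near `0`. -/
theorem stmt_4 (r p : ℕ) (hp : 1 ≤ p) (ε : ℝ) (hε : 0 < ε)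
    (A : ℝ × (Fin r → ℝ) → (Fin r → ℝ))
    (hA : AnalyticAt ℝ A 0) (hA0 : A 0 = 0)
    (H : ℝ → Fin r → ℝ) (hH : ContDiffOn ℝ (⊤ : ℕ∞) H (Icc (-ε) ε))
    (hODE : ∀ x ∈ Ioo (-ε) ε, ∃ d : Fin r → ℝ,
      HasDerivAt H d x ∧ x ^ (p+1) • d = A (x, H x))
    (hQA : ∀ φ : ℝ → ℝ, IsSimple r H ε φ →
      (∀ n : ℕ, iteratedDeriv n φ 0 = 0) → ∀ᶠ x in nhds (0:ℝ), φ x = 0)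
    (φ : ℝ → ℝ) (hφ : IsSimple r H ε φ) (hφ0 : φ 0 = 0) :
    ∃ ψ : ℝ → ℝ, IsSimple r H ε ψ ∧
      ∀ᶠ x in nhdsWithin (0:ℝ) {(0:ℝ)}ᶜ, ψ x = φ x / x := by
  classical
  obtain ⟨n, k, f, P, hf, hP0, hEq⟩ := hφ
  set s : Set ℝ := Icc (-ε) ε with hs
  set a : Fin r → ℝ :=
    fun j => iteratedDerivWithin (k+1) (fun t => H t j) s 0 / (k+1).factorial with ha
  -- divide the polynomials by X
  have hXdvd : ∀ l, Polynomial.X ∣ P l := fun l =>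
    Polynomial.X_dvd_iff.2 (by rw [Polynomial.coeff_zero_eq_eval_zero]; exact hP0 l)
  choose Qp hQp using hXdvd
  have hPeval : ∀ l (x : ℝ), (P l).eval x = x * (Qp l).eval x := by
    intro l x
    conv_lhs => rw [hQp l]
    simp [Polynomial.eval_mul]
  -- the auxiliary analytic function g
  set g : ℝ × (Fin r → Fin n → ℝ) → ℝ := fun y =>
    f (y.1, fun j l => y.1 * ((Qp l).eval y.1 * (y.2 j l + a j))) with hg
  have hf00 : f (0, fun _ _ => (0:ℝ)) = 0 := by
    have h1 := hEq.self_of_nhds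
    rw [hφ0] at h1
    have h2 : (fun (j : Fin r) (l : Fin n) =>
        TkWithin (fun t => H t j) s k ((P l).eval 0)) = (fun _ _ => (0:ℝ)) := by
      funext j l
      rw [hP0 l]
      simp [TkWithin]
    rw [h2] at h1
    exact h1.symm
  -- the inner map is analytic
  have hinner : AnalyticAt ℝ (fun y : ℝ × (Fin r → Fin n → ℝ) =>
      ((y.1, fun j l => y.1 * ((Qp l).eval y.1 * (y.2 j l + a j)))
        : ℝ × (Fin r → Fin n → ℝ))) 0 := by
    apply AnalyticAt.prod analyticAt_fst
    apply AnalyticAt.pi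
    intro j
    apply AnalyticAt.pi
    intro l
    apply AnalyticAt.mul analyticAt_fst
    apply AnalyticAt.mul
    · have h3 : AnalyticAt ℝ (fun x : ℝ => (Polynomial.aeval x) (Qp l)) 0 :=
        analyticAt_id.aeval_polynomial (Qp l)
      have h4 : AnalyticAt ℝ (fun x : ℝ => (Qp l).eval x) 0 := by
        have heq : (fun x : ℝ => (Polynomial.aeval x) (Qp l)) = fun x : ℝ => (Qp l).eval x := by
          funext x
          exact congrFun (Polynomial.coe_aeval_eq_eval x) (Qp l)
        rwa [heq] at h3
      exact h4.comp (x := (0 : ℝ × (Fin r → Fin n → ℝ))) analyticAt_fst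
    apply AnalyticAt.add
    · exact ((ContinuousLinearMap.proj l).comp ((ContinuousLinearMap.proj j).comp
        (ContinuousLinearMap.snd ℝ ℝ (Fin r → Fin n → ℝ)))).analyticAt 0
    · exact analyticAt_const
  have hganal : AnalyticAt ℝ g 0 := by
    have hi0 : (fun y : ℝ × (Fin r → Fin n → ℝ) =>
        ((y.1, fun j l => y.1 * ((Qp l).eval y.1 * (y.2 j l + a j)))
          : ℝ × (Fin r → Fin n → ℝ))) 0 = 0 := by
      refine Prod.ext rfl ?_
      funext j l
      exact zero_mul _
    have h5 : AnalyticAt ℝ f ((fun y : ℝ × (Fin r → Fin n → ℝ) =>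
        ((y.1, fun j l => y.1 * ((Qp l).eval y.1 * (y.2 j l + a j)))
          : ℝ × (Fin r → Fin n → ℝ))) 0) := by
      rw [hi0]
      exact hf
    exact AnalyticAt.comp (f := (fun y : ℝ × (Fin r → Fin n → ℝ) =>
      ((y.1, fun j l => y.1 * ((Qp l).eval y.1 * (y.2 j l + a j)))
        : ℝ × (Fin r → Fin n → ℝ)))) h5 hinner
  have hg0 : ∀ u : Fin r → Fin n → ℝ, g (0, u) = 0 := by
    intro u
    simp only [hg]
    have h6 : (fun (j : Fin r) (l : Fin n) =>
        (0:ℝ) * ((Qp l).eval 0 * (u j l + a j))) = (fun _ _ => (0:ℝ)) := by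
      funext j l
      exact zero_mul _
    calc f ((0:ℝ), fun j l => (0:ℝ) * ((Qp l).eval 0 * (u j l + a j)))
        = f (0, fun _ _ => (0:ℝ)) := by rw [h6]
      _ = 0 := hf00
  obtain ⟨F, hFanal, hFev⟩ := div_slice hganal hg0
  set v : ℝ → Fin r → Fin n → ℝ :=
    fun x j l => TkWithin (fun t => H t j) s (k+1) ((P l).eval x) with hv
  refine ⟨fun x => F (x, v x), ⟨n, k+1, F, P, hFanal, hP0,
    Filter.Eventually.of_forall (fun x => rfl)⟩, ?_⟩
  -- the key pointwise identity
  have hkey : ∀ x : ℝ, f (x, fun j l => TkWithin (fun t => H t j) s k ((P l).eval x))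
      = g (x, v x) := by
    intro x
    have h8 : (fun (j : Fin r) (l : Fin n) => TkWithin (fun t => H t j) s k ((P l).eval x))
        = fun j l => x * ((Qp l).eval x *
            (TkWithin (fun t => H t j) s (k+1) ((P l).eval x) + a j)) := by
      funext j l
      rw [Tk_succ (fun t => H t j) s k ((P l).eval x)]
      rw [hPeval l x]
      simp only [ha]
      ring
    calc f (x, fun j l => TkWithin (fun t => H t j) s k ((P l).eval x))
        = f (x, fun j l => x * ((Qp l).eval x *
            (TkWithin (fun t => H t j) s (k+1) ((P l).eval x) + a j))) := by rw [h8]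
      _ = g (x, v x) := rfl
  -- tendsto of the argument
  have hvt : Tendsto (fun x : ℝ => ((x, v x) : ℝ × (Fin r → Fin n → ℝ)))
      (𝓝 (0:ℝ)) (𝓝 (0 : ℝ × (Fin r → Fin n → ℝ))) := by
    have h7 : Tendsto v (𝓝 (0:ℝ)) (𝓝 (0 : Fin r → Fin n → ℝ)) := by
      rw [tendsto_pi_nhds]
      intro j
      rw [Pi.zero_apply, tendsto_pi_nhds]
      intro l
      rw [Pi.zero_apply]
      have hHj : ContDiffOn ℝ (⊤ : ℕ∞) (fun t => H t j) s := (contDiffOn_pi.1 hH) j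
      have hTk := tendsto_TkWithin hε hHj (k+1)
      have hPl : Tendsto (fun x : ℝ => (P l).eval x) (𝓝 (0:ℝ)) (𝓝 0) := by
        have h9 := ((P l).continuous).tendsto 0
        rwa [hP0 l] at h9
      exact hTk.comp hPl
    exact tendsto_id.prodMk_nhds h7
  filter_upwards [mem_nhdsWithin_of_mem_nhds hEq,
    mem_nhdsWithin_of_mem_nhds (hvt.eventually hFev), self_mem_nhdsWithin] with x hx1 hx2 hx0
  have hx0' : (x:ℝ) ≠ 0 := hx0
  rw [eq_div_iff hx0']
  have hx2' : g (x, v x) = x * F (x, v x) := hx2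
  rw [hx1, hkey x, hx2']
  ring
end

section
/- Let h be holomorphic and bounded on a sector S(α,β;ρ) with Gevrey asymptotic expansion of order κ with right-hand side identically 0 (h ∼_κ 0). Then h is exponentially small of order 1/κ: for every η>0 there exists a>0 such that |h(z) exp(a|z|^{−1/κ})| is bounded on S(α+η,β−η;ρ−η). Conversely, exponential smallness of order 1/κ implies h ∼_κ 0. -/
open Set

set_option maxHeartbeats 1000000

/-- The open sector `S(α,β;ρ) = {z : 0 < |z| < ρ, α < arg z < β}` (the argument being
allowed to range over all of `ℝ`). -/
def Sector (α β ρ : ℝ) : Set ℂ :=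
  {z : ℂ | 0 < ‖z‖ ∧ ‖z‖ < ρ ∧
    ∃ θ : ℝ, α < θ ∧ θ < β ∧ z = (‖z‖ : ℂ) * Complex.exp (θ * Complex.I)}


/-- `x * log x` is monotone on `[1, ∞)`. -/
lemma aux_mul_log_mono {u v : ℝ} (hu : 1 ≤ u) (huv : u ≤ v) :
    u * Real.log u ≤ v * Real.log v := by
  have h0 : 0 ≤ Real.log u := Real.log_nonneg hu
  have h1 : Real.log u ≤ Real.log v := Real.log_le_log (by linarith) huv
  nlinarith

/-- `Γ ≤ 1` on `[1,2]`, by convexity. -/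
lemma aux_Gamma_le_one {y : ℝ} (h1 : 1 ≤ y) (h2 : y ≤ 2) : Real.Gamma y ≤ 1 := by
  have hc : Real.Gamma ((2-y) • (1:ℝ) + (y-1) • (2:ℝ))
      ≤ (2-y) • Real.Gamma 1 + (y-1) • Real.Gamma 2 :=
    Real.convexOn_Gamma.2 (by norm_num) (by norm_num) (by linarith) (by linarith) (by ring)
  have he : (2 - y) • (1:ℝ) + (y - 1) • (2:ℝ) = y := by simp only [smul_eq_mul]; ring
  rw [he, Real.Gamma_one, Real.Gamma_two] at hc
  refine hc.trans_eq ?_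
  simp only [smul_eq_mul]; ring

/-- Upper bound `Γ(x+1) ≤ (x+1)^(x+1)` for `x ≥ 0`. -/
lemma aux_Gamma_upper {x : ℝ} (hx : 0 ≤ x) :
    Real.Gamma (x + 1) ≤ (x + 1) ^ (x + 1 : ℝ) := by
  have hx1 : (1:ℝ) ≤ x + 1 := by linarith
  rcases le_or_gt (x + 1) 2 with h2 | h2
  · refine (aux_Gamma_le_one hx1 h2).trans ?_
    calc (1:ℝ) = (x+1) ^ (0:ℝ) := by rw [Real.rpow_zero]
    _ ≤ (x+1) ^ (x+1:ℝ) := Real.rpow_le_rpow_of_exponent_le hx1 (by linarith)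
  · set n := ⌈x⌉₊ with hn
    have hxn : x ≤ (n:ℝ) := Nat.le_ceil x
    have hnx : (n:ℝ) ≤ x + 1 := le_of_lt (Nat.ceil_lt_add_one hx)
    have h1 : Real.Gamma (x+1) ≤ Real.Gamma ((n:ℝ)+1) := by
      rcases eq_or_lt_of_le (by linarith : x + 1 ≤ (n:ℝ) + 1) with he | hl
      · rw [he]
      · exact le_of_lt (Real.Gamma_strictMonoOn_Ici (by simpa using le_of_lt h2)
          (by simp only [mem_Ici]; linarith) hl)
    have h2' : Real.Gamma ((n:ℝ)+1) = (n.factorial : ℝ) := Real.Gamma_nat_eq_factorial n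
    have h3 : (n.factorial : ℝ) ≤ (n:ℝ) ^ n := by exact_mod_cast Nat.cast_le.mpr (Nat.factorial_le_pow n)
    have h4 : (n:ℝ) ^ n ≤ (x+1) ^ n := pow_le_pow_left₀ (by positivity) hnx n
    have h5 : (x+1) ^ n = (x+1) ^ ((n:ℕ):ℝ) := (Real.rpow_natCast _ n).symm
    have h6 : (x+1) ^ ((n:ℕ):ℝ) ≤ (x+1) ^ (x+1:ℝ) :=
      Real.rpow_le_rpow_of_exponent_le hx1 hnx
    calc Real.Gamma (x+1) ≤ (n.factorial:ℝ) := h1.trans_eq h2'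
      _ ≤ (x+1)^n := h3.trans h4
      _ ≤ (x+1)^(x+1:ℝ) := h5 ▸ h6

/-- Lower bound `u^s e^{-u} ≤ Γ(s+1)` for `s ≥ 0`, `u > 0`. -/
lemma aux_Gamma_lower {s u : ℝ} (hs : 0 ≤ s) (hu : 0 < u) :
    u ^ (s:ℝ) * Real.exp (-u) ≤ Real.Gamma (s + 1) := by
  have hs1 : 0 < s + 1 := by linarith
  rw [Real.Gamma_eq_integral hs1]
  simp only [add_sub_cancel_right]
  have hint : MeasureTheory.IntegrableOn (fun x => Real.exp (-x) * x ^ (s:ℝ))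
      (Ioi 0) MeasureTheory.volume := by
    simpa using Real.GammaIntegral_convergent hs1
  have hsub : Ioi u ⊆ Ioi (0:ℝ) := Ioi_subset_Ioi (le_of_lt hu)
  have hintu : MeasureTheory.IntegrableOn (fun x => Real.exp (-x) * x ^ (s:ℝ))
      (Ioi u) MeasureTheory.volume := hint.mono_set hsub
  have hintc : MeasureTheory.IntegrableOn (fun x => Real.exp (-x) * u ^ (s:ℝ))
      (Ioi u) MeasureTheory.volume := by
    have := (exp_neg_integrableOn_Ioi u (by norm_num : (0:ℝ) < 1))
    simpa [MeasureTheory.IntegrableOn] using this.mul_const (u ^ (s:ℝ))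
  have step1 : u ^ (s:ℝ) * Real.exp (-u)
      = ∫ x in Ioi u, Real.exp (-x) * u ^ (s:ℝ) := by
    rw [MeasureTheory.integral_mul_const, integral_exp_neg_Ioi]; ring
  have step2 : (∫ x in Ioi u, Real.exp (-x) * u ^ (s:ℝ))
      ≤ ∫ x in Ioi u, Real.exp (-x) * x ^ (s:ℝ) := by
    refine MeasureTheory.setIntegral_mono_on hintc hintu measurableSet_Ioi ?_
    intro x hx
    have hx' : u ≤ x := le_of_lt hx
    have := Real.rpow_le_rpow (le_of_lt hu) hx' hs
    exact mul_le_mul_of_nonneg_left this (Real.exp_nonneg _)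
  have step3 : (∫ x in Ioi u, Real.exp (-x) * x ^ (s:ℝ))
      ≤ ∫ x in Ioi 0, Real.exp (-x) * x ^ (s:ℝ) := by
    refine MeasureTheory.setIntegral_mono_set hint ?_ (HasSubset.Subset.eventuallyLE hsub)
    filter_upwards [MeasureTheory.ae_restrict_mem measurableSet_Ioi] with x hx
    exact mul_nonneg (Real.exp_nonneg _) (Real.rpow_nonneg (le_of_lt hx) _)
  linarith [step1, step2, step3]

lemma sector_subset {α β ρ η : ℝ} (hη : 0 < η) :
    Sector (α + η) (β - η) (ρ - η) ⊆ Sector α β ρ := by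
  rintro z ⟨h1, h2, θ, ht1, ht2, he⟩
  exact ⟨h1, by linarith, θ, by linarith, by linarith, he⟩

/-- Key quantitative lemma for the forward direction. -/
lemma key_fwd (κ K A : ℝ) (hκ : 0 < κ) (hK : 0 < K) (hA : 0 < A) :
    ∃ a T C : ℝ, 0 < a ∧ 0 < T ∧ 0 ≤ C ∧ ∀ r : ℝ, 0 < r → T ≤ r ^ (-(1/κ)) →
      ∃ N : ℕ, K * A ^ N * Real.Gamma (N * κ + 1) * r ^ N
        * Real.exp (a * r ^ (-(1/κ))) ≤ C := by
  set Lp : ℝ := max (Real.log A) 0 with hLp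
  have hLp0 : 0 ≤ Lp := le_max_right _ _
  have hLpA : Real.log A ≤ Lp := le_max_left _ _
  set lc : ℝ := -((Lp + 2)/κ) with hlc
  set c : ℝ := Real.exp lc / (2*κ) with hc
  have hc0 : 0 < c := div_pos (Real.exp_pos _) (by linarith)
  have h2cκ : 2 * c * κ = Real.exp lc := by
    rw [hc]; field_simp
  have hlog2cκ : Real.log (2*c*κ) = lc := by rw [h2cκ, Real.log_exp]
  have hκlc : κ * lc = -(Lp + 2) := by rw [hlc]; field_simp
  set ε : ℝ := c / (2*(1+κ)) with hε
  have hε0 : 0 < ε := div_pos hc0 (by linarith)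
  set D : ℝ := (1+κ) * (-1 - Real.log ε) with hD
  have hεc : (1+κ) * ε = c/2 := by rw [hε]; field_simp
  clear_value Lp lc c ε D
  clear hLp hlc hc hε
  refine ⟨c, max (Real.exp 1) (1/(c*κ)), K * Real.exp (lc + D), hc0,
    lt_of_lt_of_le (Real.exp_pos 1) (le_max_left _ _),
    le_of_lt (mul_pos hK (Real.exp_pos _)), ?_⟩
  intro r hr hTt
  set t : ℝ := r ^ (-(1/κ)) with htdef
  have ht0 : 0 < t := Real.rpow_pos_of_pos hr _
  have htE : Real.exp 1 ≤ t := le_trans (le_max_left _ _) hTt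
  have htck : 1 ≤ c * κ * t := by
    have h1 : 1/(c*κ) ≤ t := le_trans (le_max_right _ _) hTt
    rw [div_le_iff₀ (mul_pos hc0 hκ)] at h1
    nlinarith
  have hlt1 : 1 ≤ Real.log t := by
    rw [← Real.log_exp 1]
    exact Real.log_le_log (Real.exp_pos 1) htE
  have hlt0 : 0 ≤ Real.log t := by linarith
  have hlogt : Real.log t = -(1/κ) * Real.log r := Real.log_rpow hr _
  have hlogr : Real.log r = -(κ * Real.log t) := by
    rw [hlogt]; field_simp
  set N : ℕ := ⌊c * t⌋₊ with hN
  have hN1 : (N:ℝ) ≤ c * t := Nat.floor_le (mul_nonneg hc0.le ht0.le)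
  have hN2 : c * t ≤ (N:ℝ) + 1 := le_of_lt (Nat.lt_floor_add_one _)
  clear_value N t
  refine ⟨N, ?_⟩
  have hN0 : (0:ℝ) ≤ (N:ℝ) := Nat.cast_nonneg N
  have e1 : A ^ N = Real.exp ((N:ℝ) * Real.log A) := by
    rw [Real.exp_nat_mul, Real.exp_log hA]
  have e2 : r ^ N = Real.exp ((N:ℝ) * Real.log r) := by
    rw [Real.exp_nat_mul, Real.exp_log hr]
  have hNκ0 : (0:ℝ) ≤ (N:ℝ) * κ := mul_nonneg hN0 hκ.le
  have hGam : Real.Gamma ((N:ℝ) * κ + 1)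
      ≤ Real.exp (((N:ℝ)*κ+1) * Real.log ((N:ℝ)*κ+1)) := by
    refine (aux_Gamma_upper hNκ0).trans_eq ?_
    rw [Real.rpow_def_of_pos (by linarith), mul_comm]
  have hS : (N:ℝ) * Real.log A + ((N:ℝ)*κ+1) * Real.log ((N:ℝ)*κ+1)
      + (N:ℝ) * Real.log r + c * t ≤ lc + D := by
    rw [hlogr]
    have h1 : (N:ℝ) * Real.log A ≤ c * t * Lp := by
      have u1 : (N:ℝ) * Real.log A ≤ (N:ℝ) * Lp :=
        mul_le_mul_of_nonneg_left hLpA hN0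
      have u2 : (N:ℝ) * Lp ≤ c * t * Lp := mul_le_mul_of_nonneg_right hN1 hLp0
      linarith
    have h2 : ((N:ℝ)*κ+1) * Real.log ((N:ℝ)*κ+1)
        ≤ c*κ*t*lc + lc + c*κ*t*Real.log t + Real.log t := by
      have hNκct : (N:ℝ)*κ ≤ c*κ*t := by
        have := mul_le_mul_of_nonneg_right hN1 hκ.le
        nlinarith
      have ha2 : ((N:ℝ)*κ+1) * Real.log ((N:ℝ)*κ+1)
          ≤ (c*κ*t+1) * Real.log (c*κ*t+1) :=
        aux_mul_log_mono (by linarith) (by linarith)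
      have hb2 : Real.log (c*κ*t+1) ≤ Real.log (2*c*κ*t) := by
        apply Real.log_le_log (by linarith) (by linarith)
      have hc2 : Real.log (2*c*κ*t) = lc + Real.log t := by
        rw [show (2*c*κ*t : ℝ) = (2*c*κ)*t by ring,
          Real.log_mul (by nlinarith) (ne_of_gt ht0), hlog2cκ]
      calc ((N:ℝ)*κ+1) * Real.log ((N:ℝ)*κ+1)
          ≤ (c*κ*t+1) * Real.log (c*κ*t+1) := ha2
        _ ≤ (c*κ*t+1) * Real.log (2*c*κ*t) :=
            mul_le_mul_of_nonneg_left hb2 (by linarith)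
        _ = (c*κ*t+1) * (lc + Real.log t) := by rw [hc2]
        _ = c*κ*t*lc + lc + c*κ*t*Real.log t + Real.log t := by ring
    have h3 : (N:ℝ) * -(κ * Real.log t)
        ≤ κ * Real.log t - c*κ*t*Real.log t := by
      have u3 : (c*t - 1) * (κ * Real.log t) ≤ (N:ℝ) * (κ * Real.log t) :=
        mul_le_mul_of_nonneg_right (by linarith) (mul_nonneg hκ.le hlt0)
      linarith [u3]
    have h4 : (1+κ) * Real.log t ≤ (c/2) * t + D := by
      have hlet : Real.log t = Real.log (ε * t) - Real.log ε := by
        rw [Real.log_mul (ne_of_gt hε0) (ne_of_gt ht0)]; ring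
      have hle : Real.log (ε * t) ≤ ε * t - 1 :=
        Real.log_le_sub_one_of_pos (mul_pos hε0 ht0)
      calc (1+κ) * Real.log t = (1+κ) * (Real.log (ε*t) - Real.log ε) := by
            rw [← hlet]
        _ ≤ (1+κ) * (ε*t - 1 - Real.log ε) :=
            mul_le_mul_of_nonneg_left (by linarith) (by linarith)
        _ = ((1+κ)*ε) * t + D := by rw [hD]; ring
        _ = (c/2) * t + D := by rw [hεc]
    have hκlc' : c*κ*t*lc = -(c*t*Lp) - 2*(c*t) := by
      have u4 : c * t * (κ * lc) = c * t * (-(Lp+2)) := by rw [hκlc]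
      linear_combination u4
    have hct : 0 ≤ c * t := mul_nonneg hc0.le ht0.le
    linarith [h1, h2, h3, h4, hκlc', hct]
  calc K * A ^ N * Real.Gamma ((N:ℝ) * κ + 1) * r ^ N * Real.exp (c * t)
      ≤ K * Real.exp ((N:ℝ) * Real.log A)
        * Real.exp (((N:ℝ)*κ+1) * Real.log ((N:ℝ)*κ+1))
        * Real.exp ((N:ℝ) * Real.log r) * Real.exp (c * t) := by
        rw [e1, e2]
        apply mul_le_mul_of_nonneg_right _ (Real.exp_nonneg _)
        apply mul_le_mul_of_nonneg_right _ (Real.exp_nonneg _)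
        exact mul_le_mul_of_nonneg_left hGam
          (mul_nonneg hK.le (Real.exp_nonneg _))
    _ = K * Real.exp ((N:ℝ) * Real.log A + ((N:ℝ)*κ+1) * Real.log ((N:ℝ)*κ+1)
        + (N:ℝ) * Real.log r + c * t) := by
        rw [mul_assoc, mul_assoc, mul_assoc, ← Real.exp_add, ← Real.exp_add, ← Real.exp_add]; ring_nf
    _ ≤ K * Real.exp (lc + D) :=
        mul_le_mul_of_nonneg_left (Real.exp_le_exp.mpr hS) (le_of_lt hK)

/-- Key quantitative lemma for the backward direction. -/
lemma key_bwd (κ a : ℝ) (hκ : 0 < κ) (ha : 0 < a) (N : ℕ) (r : ℝ) (hr : 0 < r) :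
    Real.exp (-(a * r ^ (-(1/κ)))) ≤ (a ^ (-κ:ℝ)) ^ N * Real.Gamma (N * κ + 1) * r ^ N := by
  set t : ℝ := r ^ (-(1/κ)) with htdef
  have ht0 : 0 < t := Real.rpow_pos_of_pos hr _
  have key := aux_Gamma_lower (s := (N:ℝ)*κ) (u := a*t)
    (mul_nonneg (Nat.cast_nonneg N) hκ.le) (mul_pos ha ht0)
  have e1 : ((a*t) : ℝ) ^ ((N:ℝ)*κ) = a ^ ((N:ℝ)*κ) * t ^ ((N:ℝ)*κ) :=
    Real.mul_rpow ha.le ht0.le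
  have ea : (a ^ (-κ:ℝ)) ^ N * a ^ ((N:ℝ)*κ) = 1 := by
    rw [← Real.rpow_natCast (a ^ (-κ:ℝ)) N, ← Real.rpow_mul ha.le,
      ← Real.rpow_add ha, show (-κ)*(N:ℝ) + (N:ℝ)*κ = 0 by ring, Real.rpow_zero]
  have er : r ^ N * t ^ ((N:ℝ)*κ) = 1 := by
    rw [htdef, ← Real.rpow_mul hr.le, ← Real.rpow_natCast r N,
      ← Real.rpow_add hr, show (N:ℝ) + -(1/κ)*((N:ℝ)*κ) = 0 by field_simp; ring,
      Real.rpow_zero]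
  have hP0 : 0 < (a ^ (-κ:ℝ)) ^ N * r ^ N :=
    mul_pos (pow_pos (Real.rpow_pos_of_pos ha _) N) (pow_pos hr N)
  have hP1 : ((a ^ (-κ:ℝ)) ^ N * r ^ N) * (a ^ ((N:ℝ)*κ) * t ^ ((N:ℝ)*κ)) = 1 := by
    calc ((a ^ (-κ:ℝ)) ^ N * r ^ N) * (a ^ ((N:ℝ)*κ) * t ^ ((N:ℝ)*κ))
        = ((a ^ (-κ:ℝ)) ^ N * a ^ ((N:ℝ)*κ)) * (r ^ N * t ^ ((N:ℝ)*κ)) := by ring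
      _ = 1 := by rw [ea, er, one_mul]
  calc Real.exp (-(a*t))
      = 1 * Real.exp (-(a*t)) := (one_mul _).symm
    _ = (((a ^ (-κ:ℝ)) ^ N * r ^ N) * (a ^ ((N:ℝ)*κ) * t ^ ((N:ℝ)*κ)))
        * Real.exp (-(a*t)) := by rw [hP1]
    _ = ((a ^ (-κ:ℝ)) ^ N * r ^ N) * ((a*t) ^ ((N:ℝ)*κ) * Real.exp (-(a*t))) := by
        rw [e1]; ring
    _ ≤ ((a ^ (-κ:ℝ)) ^ N * r ^ N) * Real.Gamma ((N:ℝ)*κ + 1) :=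
        mul_le_mul_of_nonneg_left key hP0.le
    _ = (a ^ (-κ:ℝ)) ^ N * Real.Gamma ((N:ℝ)*κ + 1) * r ^ N := by ring

/-- A bounded holomorphic function `h` on a sector `S(α,β;ρ)` has
the zero series as Gevrey asymptotic expansion of order `κ` (`h ∼_κ 0`) if and only
if `h` is exponentially small of order `1/κ`: for every `η > 0` there is `a > 0`
with `h(z)·exp(a·|z|^(−1/κ))` bounded on `S(α+η,β−η;ρ−η)`. -/
theorem stmt_10 (α β ρ κ : ℝ) (hρ : 0 < ρ) (hαβ : α < β) (hκ : 0 < κ)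
    (h : ℂ → ℂ)
    (hhol : DifferentiableOn ℂ h (Sector α β ρ))
    (hbdd : ∃ M : ℝ, ∀ z ∈ Sector α β ρ, ‖h z‖ ≤ M) :
    ((∀ η : ℝ, 0 < η → ∃ K A : ℝ, 0 < K ∧ 0 < A ∧
        ∀ N : ℕ, ∀ z ∈ Sector (α + η) (β - η) (ρ - η),
          ‖h z‖ ≤ K * A ^ N * Real.Gamma (N * κ + 1) * ‖z‖ ^ N)
      ↔
      (∀ η : ℝ, 0 < η → ∃ a : ℝ, 0 < a ∧ ∃ C : ℝ,
        ∀ z ∈ Sector (α + η) (β - η) (ρ - η),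
          ‖h z‖ * Real.exp (a * ‖z‖ ^ (-(1/κ))) ≤ C)) := by
  obtain ⟨M, hM⟩ := hbdd
  constructor
  · intro hyp η hη
    obtain ⟨K, A, hK, hA, hbound⟩ := hyp η hη
    obtain ⟨a, T, C, ha, hT, hC, hkey⟩ := key_fwd κ K A hκ hK hA
    refine ⟨a, ha, max M 0 * Real.exp (a*T) + C, ?_⟩
    intro z hz
    have hz' : z ∈ Sector α β ρ := sector_subset hη hz
    have hr0 : 0 < ‖z‖ := hz.1
    have hMz : ‖h z‖ ≤ max M 0 := le_trans (hM z hz') (le_max_left _ _)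
    have hM0 : 0 ≤ max M 0 * Real.exp (a*T) :=
      mul_nonneg (le_max_right M 0) (Real.exp_nonneg _)
    rcases le_or_gt T (‖z‖ ^ (-(1/κ))) with hc1 | hc1
    · obtain ⟨N, hN⟩ := hkey (‖z‖) hr0 hc1
      calc ‖h z‖ * Real.exp (a * ‖z‖ ^ (-(1/κ)))
          ≤ (K * A ^ N * Real.Gamma (N * κ + 1) * ‖z‖ ^ N)
            * Real.exp (a * ‖z‖ ^ (-(1/κ))) :=
            mul_le_mul_of_nonneg_right (hbound N z hz) (Real.exp_nonneg _)
        _ ≤ C := hN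
        _ ≤ max M 0 * Real.exp (a*T) + C := by linarith
    · have hexp : Real.exp (a * ‖z‖ ^ (-(1/κ))) ≤ Real.exp (a*T) :=
        Real.exp_le_exp.mpr (mul_le_mul_of_nonneg_left hc1.le ha.le)
      calc ‖h z‖ * Real.exp (a * ‖z‖ ^ (-(1/κ)))
          ≤ max M 0 * Real.exp (a*T) :=
            mul_le_mul hMz hexp (Real.exp_nonneg _) (le_max_right M 0)
        _ ≤ max M 0 * Real.exp (a*T) + C := by linarith
  · intro hyp η hη
    obtain ⟨a, ha, C, hyp'⟩ := hyp η hη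
    refine ⟨max C 1, a ^ (-κ:ℝ), lt_of_lt_of_le one_pos (le_max_right C 1),
      Real.rpow_pos_of_pos ha _, ?_⟩
    intro N z hz
    have hr0 : 0 < ‖z‖ := hz.1
    have h1 : ‖h z‖
        ≤ C * Real.exp (-(a * ‖z‖ ^ (-(1/κ)))) := by
      have heq : ‖h z‖
          = (‖h z‖ * Real.exp (a * ‖z‖ ^ (-(1/κ))))
            * Real.exp (-(a * ‖z‖ ^ (-(1/κ)))) := by
        rw [mul_assoc, ← Real.exp_add]; simp
      rw [heq]
      exact mul_le_mul_of_nonneg_right (hyp' z hz) (Real.exp_nonneg _)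
    have h2 := key_bwd κ a hκ ha N (‖z‖) hr0
    calc ‖h z‖ ≤ C * Real.exp (-(a * ‖z‖ ^ (-(1/κ)))) := h1
      _ ≤ max C 1 * Real.exp (-(a * ‖z‖ ^ (-(1/κ)))) :=
          mul_le_mul_of_nonneg_right (le_max_left _ _) (Real.exp_nonneg _)
      _ ≤ max C 1 * ((a ^ (-κ:ℝ)) ^ N * Real.Gamma (N * κ + 1)
          * ‖z‖ ^ N) :=
          mul_le_mul_of_nonneg_left h2 (le_of_lt (lt_of_lt_of_le one_pos (le_max_right C 1)))
      _ = max C 1 * (a ^ (-κ:ℝ)) ^ N * Real.Gamma (N * κ + 1)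
          * ‖z‖ ^ N := by ring
end

section
/- Let p ≥ 1 and let q(z) ∈ C[z^{−1}] be a polynomial in z^{−1} of exact degree p without constant term. Let P_1(z), P_2(z) be distinct real polynomials with P_j(0)=0, deg P_j < (p+1)·val P_j, and positive leading coefficients. Then the principal parts at z=0 of the meromorphic Laurent series q(P_1(z)) and q(P_2(z)) are different; in particular there exist β ≠ 0 in C and an integer s > 0 such that q(P_1(z)) − q(P_2(z)) = β z^{−s}(1 + O(|z|)). -/
open Set

open Polynomial

set_option maxHeartbeats 1000000 in
lemma aux_upper (V : Polynomial ℂ) (n : ℕ) (h : X ^ n ∣ V) :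
    ∃ C : ℝ, 0 < C ∧ ∀ z : ℂ, ‖z‖ ≤ 1 →
      ‖V.eval z‖ ≤ C * ‖z‖ ^ n := by
  obtain ⟨W, rfl⟩ := h
  obtain ⟨x, -, hM⟩ := (isCompact_closedBall (0:ℂ) 1).exists_isMaxOn
    (Set.nonempty_of_mem (Metric.mem_closedBall_self zero_le_one))
    ((continuous_norm.comp W.continuous).continuousOn)
  set M := ‖W.eval x‖ with hMdef
  refine ⟨max M 1, lt_of_lt_of_le one_pos (le_max_right _ _), fun z hz => ?_⟩
  have h1 : ‖W.eval z‖ ≤ max M 1 := by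
    have := hM (by simpa [Metric.mem_closedBall, Complex.dist_eq] using hz)
    exact le_trans this (le_max_left _ _)
  have heq : ‖(X ^ n * W).eval z‖
      = ‖W.eval z‖ * ‖z‖ ^ n := by
    simp [map_mul, map_pow]; ring
  rw [heq]
  exact mul_le_mul_of_nonneg_right h1 (by positivity)

set_option maxHeartbeats 1000000 in
lemma aux_lower (V : Polynomial ℂ) (n : ℕ) (h : X ^ n ∣ V) (h0 : V.coeff n ≠ 0) :
    ∃ c δ : ℝ, 0 < c ∧ 0 < δ ∧ ∀ z : ℂ, ‖z‖ < δ →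
      c * ‖z‖ ^ n ≤ ‖V.eval z‖ := by
  obtain ⟨W, rfl⟩ := h
  have hW0 : W.coeff 0 ≠ 0 := by
    have := Polynomial.coeff_X_pow_mul W n 0
    rw [zero_add] at this
    rwa [this] at h0
  have hW0' : W.eval 0 ≠ 0 := by rwa [← Polynomial.coeff_zero_eq_eval_zero]
  have h2 : (0:ℝ) < ‖W.eval 0‖ / 2 := by
    have := norm_pos_iff.mpr hW0'; linarith
  obtain ⟨δ, hδ, hball⟩ := Metric.continuousAt_iff.mp (W.continuous.continuousAt (x := 0))
    (‖W.eval 0‖ / 2) h2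
  refine ⟨‖W.eval 0‖ / 2, δ, h2, hδ, fun z hz => ?_⟩
  have hd : dist (W.eval z) (W.eval 0) < ‖W.eval 0‖ / 2 := by
    apply hball; simpa [Complex.dist_eq] using hz
  rw [Complex.dist_eq] at hd
  have hlow : ‖W.eval 0‖ / 2 ≤ ‖W.eval z‖ := by
    have h4 : ‖W.eval 0‖ - ‖W.eval z‖ ≤ ‖W.eval 0 - W.eval z‖ := norm_sub_norm_le _ _
    have h3 : ‖W.eval 0 - W.eval z‖ = ‖W.eval z - W.eval 0‖ := by
      exact norm_sub_rev _ _
    linarith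
  have heq : ‖(X ^ n * W).eval z‖
      = ‖W.eval z‖ * ‖z‖ ^ n := by
    simp [map_mul, map_pow]; ring
  rw [heq]
  exact mul_le_mul_of_nonneg_right hlow (by positivity)


lemma aux_ntd_pow {f : Polynomial ℝ} (hf : f ≠ 0) (n : ℕ) :
    (f ^ n).natTrailingDegree = n * f.natTrailingDegree := by
  induction n with
  | zero => simp
  | succ n ih =>
    rw [pow_succ, natTrailingDegree_mul (pow_ne_zero n hf) hf, ih]
    ring

lemma aux_tc_pow (f : Polynomial ℝ) (n : ℕ) :
    (f ^ n).trailingCoeff = f.trailingCoeff ^ n := by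
  induction n with
  | zero => simp [trailingCoeff, natTrailingDegree_one]
  | succ n ih => rw [pow_succ, trailingCoeff_mul, ih, pow_succ]

set_option maxHeartbeats 2000000 in
/-- **distinct principal parts.** Let `p ≥ 1` and let
`q(z) = Σ_{j=1}^p c_j z^{−j}` with `c_p ≠ 0` (degree exactly `p`, no constant term).
Let `P₁ ≠ P₂` be real polynomials with `P_j(0) = 0`, `deg P_j < (p+1)·val P_j` and
positive leading coefficients at `0`.  Then the principal parts at `z = 0` of
`q(P₁(z))` and `q(P₂(z))` differ; in particular
`q(P₁(z)) − q(P₂(z)) = β z^{−s} (1 + O(|z|))` for some `β ≠ 0` and an integer `s > 0`. -/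
theorem stmt_12 (p : ℕ) (hp : 1 ≤ p)
    (c : ℕ → ℂ) (hcp : c p ≠ 0)
    (q : ℂ → ℂ) (hq : ∀ z : ℂ, z ≠ 0 → q z = ∑ j ∈ Finset.Icc 1 p, c j * z ^ (-(j:ℤ)))
    (P₁ P₂ : Polynomial ℝ) (hne : P₁ ≠ P₂) (ν₁ ν₂ : ℕ)
    (hν₁ : 1 ≤ ν₁) (hν₂ : 1 ≤ ν₂)
    (hval₁ : ∀ i, i < ν₁ → P₁.coeff i = 0) (hval₂ : ∀ i, i < ν₂ → P₂.coeff i = 0)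
    (hlead₁ : 0 < P₁.coeff ν₁) (hlead₂ : 0 < P₂.coeff ν₂)
    (hdeg₁ : P₁.natDegree < (p + 1) * ν₁) (hdeg₂ : P₂.natDegree < (p + 1) * ν₂) :
    ∃ (β : ℂ) (s : ℕ), β ≠ 0 ∧ 0 < s ∧
      ∃ C δ : ℝ, 0 < C ∧ 0 < δ ∧
        ∀ z : ℂ, 0 < ‖z‖ → ‖z‖ < δ →
          ‖q ((P₁.map (algebraMap ℝ ℂ)).eval z) -
                q ((P₂.map (algebraMap ℝ ℂ)).eval z) - β * z ^ (-(s:ℤ))‖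
            ≤ C * ‖z‖ * ‖β * z ^ (-(s:ℤ))‖ := by
  have hP₁0 : P₁ ≠ 0 := fun h => by simp [h] at hlead₁
  have hP₂0 : P₂ ≠ 0 := fun h => by simp [h] at hlead₂
  set a := P₁.coeff ν₁ with ha
  set b := P₂.coeff ν₂ with hb
  have hntd₁ : P₁.natTrailingDegree = ν₁ :=
    le_antisymm (natTrailingDegree_le_of_ne_zero hlead₁.ne')
      (le_natTrailingDegree hP₁0 hval₁)
  have hntd₂ : P₂.natTrailingDegree = ν₂ :=
    le_antisymm (natTrailingDegree_le_of_ne_zero hlead₂.ne')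
      (le_natTrailingDegree hP₂0 hval₂)
  have htc₁ : P₁.trailingCoeff = a := by rw [trailingCoeff, hntd₁]
  have htc₂ : P₂.trailingCoeff = b := by rw [trailingCoeff, hntd₂]
  set μ₀ := min ν₁ ν₂ with hμ₀def
  have hμ₀ : 1 ≤ μ₀ := le_min hν₁ hν₂
  set R := P₁ - P₂ with hRdef
  have hR0 : R ≠ 0 := sub_ne_zero.mpr hne
  set μ := R.natTrailingDegree with hμdef
  have hr0 : R.trailingCoeff ≠ 0 := trailingCoeff_nonzero_iff_nonzero.mpr hR0
  -- trailing degrees / coefficients of the products P₁^i * P₂^(n-i)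
  have hT0 : ∀ i n : ℕ, P₁ ^ i * P₂ ^ n ≠ 0 :=
    fun i n => mul_ne_zero (pow_ne_zero _ hP₁0) (pow_ne_zero _ hP₂0)
  have hTntd : ∀ i n : ℕ, (P₁ ^ i * P₂ ^ n).natTrailingDegree = i * ν₁ + n * ν₂ := by
    intro i n
    rw [natTrailingDegree_mul (pow_ne_zero _ hP₁0) (pow_ne_zero _ hP₂0),
      aux_ntd_pow hP₁0, aux_ntd_pow hP₂0, hntd₁, hntd₂]
  have hTtc : ∀ i n : ℕ, (P₁ ^ i * P₂ ^ n).trailingCoeff = a ^ i * b ^ n := by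
    intro i n
    rw [trailingCoeff_mul, aux_tc_pow, aux_tc_pow, htc₁, htc₂]
  -- the symmetric sums
  set S : ℕ → Polynomial ℝ := fun j => ∑ i ∈ Finset.range j, P₁ ^ i * P₂ ^ (j - 1 - i)
    with hSdef
  have hSdvd : ∀ j : ℕ, X ^ ((j - 1) * μ₀) ∣ S j := by
    intro j
    apply Finset.dvd_sum
    intro i hi
    have hij : i + (j - 1 - i) = j - 1 := by
      simp only [Finset.mem_range] at hi; omega
    have h1 : (j - 1) * μ₀ ≤ i * ν₁ + (j - 1 - i) * ν₂ := by
      calc (j-1) * μ₀ = i * μ₀ + (j - 1 - i) * μ₀ := by rw [← add_mul, hij]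
        _ ≤ i * ν₁ + (j - 1 - i) * ν₂ :=
            Nat.add_le_add (Nat.mul_le_mul_left _ (min_le_left _ _))
              (Nat.mul_le_mul_left _ (min_le_right _ _))
    exact dvd_trans (pow_dvd_pow X h1)
      (X_pow_dvd_iff.mpr (fun d hd =>
        coeff_eq_zero_of_lt_natTrailingDegree (by rw [hTntd]; exact hd)))
  -- S p has positive coefficient at (p-1)*μ₀
  have hSnonneg : ∀ i ∈ Finset.range p, 0 ≤ (P₁ ^ i * P₂ ^ (p - 1 - i)).coeff ((p-1)*μ₀) := by
    intro i hi
    have hij : i + (p - 1 - i) = p - 1 := by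
      simp only [Finset.mem_range] at hi; omega
    have h1 : (p-1) * μ₀ ≤ i * ν₁ + (p - 1 - i) * ν₂ := by
      calc (p-1) * μ₀ = i * μ₀ + (p - 1 - i) * μ₀ := by rw [← add_mul, hij]
        _ ≤ i * ν₁ + (p - 1 - i) * ν₂ :=
            Nat.add_le_add (Nat.mul_le_mul_left _ (min_le_left _ _))
              (Nat.mul_le_mul_left _ (min_le_right _ _))
    rcases lt_or_eq_of_le h1 with h | h
    · rw [coeff_eq_zero_of_lt_natTrailingDegree (by rw [hTntd]; exact h)]
    · have : (P₁ ^ i * P₂ ^ (p-1-i)).coeff ((p-1)*μ₀) = a ^ i * b ^ (p-1-i) := by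
        rw [h, ← hTntd, ← hTtc]; rfl
      rw [this]
      positivity
  have hSpos : 0 < (S p).coeff ((p-1)*μ₀) := by
    rw [hSdef]
    simp only [finset_sum_coeff]
    apply Finset.sum_pos' hSnonneg
    by_cases hle : ν₁ ≤ ν₂
    · refine ⟨p - 1, Finset.mem_range.mpr (by omega), ?_⟩
      have hmin : μ₀ = ν₁ := min_eq_left hle
      have h : (p-1) * μ₀ = (p-1) * ν₁ + (p - 1 - (p-1)) * ν₂ := by
        simp [hmin]
      have : (P₁ ^ (p-1) * P₂ ^ (p-1-(p-1))).coeff ((p-1)*μ₀)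
          = a ^ (p-1) * b ^ (p-1-(p-1)) := by
        rw [h, ← hTntd, ← hTtc]; rfl
      rw [this]; positivity
    · refine ⟨0, Finset.mem_range.mpr (by omega), ?_⟩
      have hmin : μ₀ = ν₂ := min_eq_right (by omega)
      have h : (p-1) * μ₀ = 0 * ν₁ + (p - 1 - 0) * ν₂ := by simp [hmin]
      have : (P₁ ^ 0 * P₂ ^ (p-1-0)).coeff ((p-1)*μ₀) = a ^ 0 * b ^ (p-1-0) := by
        rw [h, ← hTntd, ← hTtc]; rfl
      rw [this]; positivity
  have hS0 : S p ≠ 0 := fun h => by simp [h] at hSpos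
  have hSntd : (S p).natTrailingDegree = (p-1) * μ₀ :=
    le_antisymm (natTrailingDegree_le_of_ne_zero hSpos.ne')
      (le_natTrailingDegree hS0 (fun d hd => X_pow_dvd_iff.mp (hSdvd p) d hd))
  set k := μ + (p-1) * μ₀ with hkdef
  set m := p * (ν₁ + ν₂) with hmdef
  -- k < m
  have hkm : k < m := by
    by_cases hνeq : ν₁ = ν₂
    · have hμ₀' : μ₀ = ν₁ := by simp [hμ₀def, hνeq]
      have hμlt : μ < (p + 1) * ν₁ := by
        have h1 : μ ≤ R.natDegree := natTrailingDegree_le_natDegree R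
        have h2 : R.natDegree ≤ max P₁.natDegree P₂.natDegree := natDegree_sub_le _ _
        have := max_lt hdeg₁ (hνeq ▸ hdeg₂)
        omega
      rw [hkdef, hmdef, hμ₀', ← hνeq]
      obtain ⟨p', rfl⟩ : ∃ p', p = p' + 1 := ⟨p - 1, by omega⟩
      simp only [Nat.add_sub_cancel]
      nlinarith
    · have hμle : μ ≤ μ₀ := by
        rcases Nat.lt_or_ge ν₁ ν₂ with h | h
        · have : R.coeff ν₁ ≠ 0 := by
            rw [hRdef, coeff_sub, hval₂ ν₁ h, sub_zero]; exact hlead₁.ne'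
          have := natTrailingDegree_le_of_ne_zero this
          omega
        · have hlt : ν₂ < ν₁ := by omega
          have : R.coeff ν₂ ≠ 0 := by
            rw [hRdef, coeff_sub, hval₁ ν₂ hlt, zero_sub, neg_ne_zero]
            exact hlead₂.ne'
          have := natTrailingDegree_le_of_ne_zero this
          omega
      have hμ₀lt : μ₀ < ν₁ + ν₂ := by omega
      rw [hkdef, hmdef]
      obtain ⟨p', rfl⟩ : ∃ p', p = p' + 1 := ⟨p - 1, by omega⟩
      simp only [Nat.add_sub_cancel]
      nlinarith
  set s := m - k with hsdef
  -- product S p * R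
  have hSR0 : S p * R ≠ 0 := mul_ne_zero hS0 hR0
  have hSRntd : (S p * R).natTrailingDegree = k := by
    rw [natTrailingDegree_mul hS0 hR0, hSntd, hkdef]; omega
  have hSRk : (S p * R).coeff k ≠ 0 := by
    rw [← hSRntd]
    exact trailingCoeff_nonzero_iff_nonzero.mpr hSR0
  -- complex side
  set φ := algebraMap ℝ ℂ with hφdef
  set A : Polynomial ℂ := ∑ j ∈ Finset.Icc 1 p,
      C (c j) * ((P₂ ^ j - P₁ ^ j) * (P₁ * P₂) ^ (p - j)).map φ with hAdef
  set B : Polynomial ℂ := ((P₁ * P₂) ^ p).map φ with hBdef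
  have hcast : ∀ (f : Polynomial ℝ) (i : ℕ), (f.map φ).coeff i = ((f.coeff i : ℝ) : ℂ) := by
    intro f i; rw [coeff_map]; rfl
  have hAcoeff : ∀ i, A.coeff i
      = ∑ j ∈ Finset.Icc 1 p, c j * (((P₂ ^ j - P₁ ^ j) * (P₁ * P₂) ^ (p - j)).coeff i : ℂ) := by
    intro i
    rw [hAdef, finset_sum_coeff]
    refine Finset.sum_congr rfl fun j _ => ?_
    rw [coeff_C_mul, hcast]
  -- vanishing of low-order terms of each summand with j < p
  have hGdvd : ∀ j, 1 ≤ j → j < p →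
      X ^ (k + 1) ∣ (P₂ ^ j - P₁ ^ j) * (P₁ * P₂) ^ (p - j) := by
    intro j hj1 hjp
    have hgeom : P₂ ^ j - P₁ ^ j = -(S j * R) := by
      rw [hSdef]
      have := geom_sum₂_mul P₁ P₂ j
      simp only [hRdef]
      rw [this]
      ring
    have hXR : X ^ μ ∣ R :=
      X_pow_dvd_iff.mpr fun d hd => coeff_eq_zero_of_lt_natTrailingDegree hd
    have hXP : X ^ ((p - j) * (ν₁ + ν₂)) ∣ (P₁ * P₂) ^ (p - j) := by
      have h1 : X ^ (ν₁ + ν₂) ∣ P₁ * P₂ := by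
        rw [pow_add]
        exact mul_dvd_mul (X_pow_dvd_iff.mpr fun d hd => hval₁ d hd)
          (X_pow_dvd_iff.mpr fun d hd => hval₂ d hd)
      calc X ^ ((p - j) * (ν₁ + ν₂)) = (X ^ (ν₁ + ν₂)) ^ (p - j) := by
            rw [← pow_mul, Nat.mul_comm]
        _ ∣ (P₁ * P₂) ^ (p - j) := pow_dvd_pow_of_dvd h1 _
    have hexp : k + 1 ≤ (j - 1) * μ₀ + μ + (p - j) * (ν₁ + ν₂) := by
      have h2 : (j - 1) * μ₀ + (p - j) * (2 * μ₀) ≤ (j - 1) * μ₀ + (p - j) * (ν₁ + ν₂) := by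
        gcongr <;> omega
      have h3 : (p - 1) * μ₀ + 1 ≤ (j - 1) * μ₀ + (p - j) * (2 * μ₀) := by
        obtain ⟨j', rfl⟩ : ∃ j', j = j' + 1 := ⟨j - 1, by omega⟩
        obtain ⟨d, rfl⟩ : ∃ d, p = j' + 1 + d + 1 := ⟨p - j' - 2, by omega⟩
        simp only [Nat.add_sub_cancel]
        have : j' + 1 + d + 1 - (j' + 1) = d + 1 := by omega
        rw [this]
        nlinarith
      rw [hkdef]; omega
    rw [hgeom, neg_mul, dvd_neg]
    calc X ^ (k + 1) ∣ X ^ ((j - 1) * μ₀ + μ + (p - j) * (ν₁ + ν₂)) := pow_dvd_pow X hexp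
      _ ∣ (S j * R) * (P₁ * P₂) ^ (p - j) := by
          rw [pow_add, pow_add]
          exact mul_dvd_mul (mul_dvd_mul (hSdvd j) hXR) hXP
  -- coefficient of A at k
  have hgeomp : P₂ ^ p - P₁ ^ p = -(S p * R) := by
    rw [hSdef]
    have := geom_sum₂_mul P₁ P₂ p
    simp only [hRdef]
    rw [this]; ring
  have hAk : A.coeff k = - (c p * ((S p * R).coeff k : ℂ)) := by
    rw [hAcoeff]
    rw [Finset.sum_eq_single p]
    · rw [Nat.sub_self, pow_zero, mul_one, hgeomp, coeff_neg]
      push_cast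
      ring
    · intro j hj hjne
      simp only [Finset.mem_Icc] at hj
      have := X_pow_dvd_iff.mp (hGdvd j hj.1 (lt_of_le_of_ne hj.2 hjne)) k (by omega)
      rw [this]
      simp
    · intro h
      exact absurd (Finset.mem_Icc.mpr ⟨hp, le_refl p⟩) h
  have hAk0 : A.coeff k ≠ 0 := by
    rw [hAk, neg_ne_zero]
    exact mul_ne_zero hcp (by exact_mod_cast hSRk)
  have hAdvd : X ^ k ∣ A := by
    rw [X_pow_dvd_iff]
    intro d hd
    rw [hAcoeff]
    apply Finset.sum_eq_zero
    intro j hj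
    simp only [Finset.mem_Icc] at hj
    rcases lt_or_eq_of_le hj.2 with hjp | rfl
    · have := X_pow_dvd_iff.mp (hGdvd j hj.1 hjp) d (by omega)
      rw [this]; simp
    · rw [Nat.sub_self, pow_zero, mul_one, hgeomp, coeff_neg]
      rw [coeff_eq_zero_of_lt_natTrailingDegree (by rw [hSRntd]; exact hd)]
      simp
  -- B facts
  have hB₀ntd : ((P₁ * P₂) ^ p).natTrailingDegree = m := by
    rw [aux_ntd_pow (mul_ne_zero hP₁0 hP₂0),
      natTrailingDegree_mul hP₁0 hP₂0, hntd₁, hntd₂]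
  have hB₀m : ((P₁ * P₂) ^ p).coeff m ≠ 0 := by
    rw [← hB₀ntd]
    exact trailingCoeff_nonzero_iff_nonzero.mpr (pow_ne_zero _ (mul_ne_zero hP₁0 hP₂0))
  have hBm : B.coeff m ≠ 0 := by
    rw [hBdef, hcast]
    exact_mod_cast hB₀m
  have hBdvd : X ^ m ∣ B := by
    rw [X_pow_dvd_iff]
    intro d hd
    rw [hBdef, hcast, coeff_eq_zero_of_lt_natTrailingDegree (by rw [hB₀ntd]; exact hd)]
    simp
  set β := A.coeff k / B.coeff m with hβdef
  have hβ0 : β ≠ 0 := div_ne_zero hAk0 hBm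
  set D : Polynomial ℂ := A * X ^ s - C β * B with hDdef
  have hsk : s + k = m := by rw [hsdef]; omega
  have hDdvd : X ^ (m + 1) ∣ D := by
    rw [X_pow_dvd_iff]
    intro d hd
    rw [hDdef, coeff_sub, coeff_mul_X_pow', coeff_C_mul]
    rcases Nat.lt_or_ge d m with hdm | hdm
    · have hBd : B.coeff d = 0 := X_pow_dvd_iff.mp hBdvd d hdm
      rw [hBd, mul_zero, sub_zero]
      split_ifs with hsd
      · exact X_pow_dvd_iff.mp hAdvd (d - s) (by omega)
      · rfl
    · have hdm' : d = m := by omega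
      subst hdm'
      have hsm : s ≤ m := by omega
      rw [if_pos hsm]
      have : m - s = k := by omega
      rw [this, hβdef, div_mul_cancel₀ _ hBm, sub_self]
  obtain ⟨c₃, δ₃, hc₃, hδ₃, hBlow⟩ := aux_lower B m hBdvd hBm
  obtain ⟨C₁, hC₁, hDup⟩ := aux_upper D (m+1) hDdvd
  have hβabs : 0 < ‖β‖ := norm_pos_iff.mpr hβ0
  refine ⟨β, s, hβ0, by omega, C₁ / (c₃ * ‖β‖), min δ₃ 1, by positivity,
    lt_min hδ₃ one_pos, ?_⟩
  intro z hz0 hzδ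
  have hz0' : z ≠ 0 := by
    intro h; rw [h] at hz0; simp at hz0
  have hz1 : ‖z‖ ≤ 1 := le_of_lt (lt_of_lt_of_le hzδ (min_le_right _ _))
  have hzδ₃ : ‖z‖ < δ₃ := lt_of_lt_of_le hzδ (min_le_left _ _)
  set u := (P₁.map φ).eval z with hudef
  set v := (P₂.map φ).eval z with hvdef
  have hBz : B.eval z = (u * v) ^ p := by
    rw [hBdef, hudef, hvdef]
    simp [Polynomial.map_pow, Polynomial.map_mul, eval_pow, eval_mul]
  have hBlb := hBlow z hzδ₃
  have hBpos : 0 < ‖B.eval z‖ :=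
    lt_of_lt_of_le (by positivity) hBlb
  have hBz0 : B.eval z ≠ 0 := fun h => by rw [h] at hBpos; simp at hBpos
  have huv : u * v ≠ 0 := by
    intro h
    apply hBz0
    rw [hBz, h, zero_pow (by omega : p ≠ 0)]
  have hu : u ≠ 0 := left_ne_zero_of_mul huv
  have hv : v ≠ 0 := right_ne_zero_of_mul huv
  have hAz : A.eval z = ∑ j ∈ Finset.Icc 1 p, c j * ((v ^ j - u ^ j) * (u * v) ^ (p - j)) := by
    rw [hAdef, eval_finset_sum]
    refine Finset.sum_congr rfl fun j _ => ?_
    simp [Polynomial.map_mul, Polynomial.map_sub, Polynomial.map_pow, eval_mul, eval_sub,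
      eval_pow, eval_C, hudef, hvdef]
  have hqsub : q u - q v = A.eval z / B.eval z := by
    rw [hq u hu, hq v hv, hAz, hBz, ← Finset.sum_sub_distrib, Finset.sum_div]
    refine Finset.sum_congr rfl fun j hj => ?_
    have hjp : j ≤ p := (Finset.mem_Icc.mp hj).2
    have e1 : u ^ (-(j:ℤ)) = (u ^ j)⁻¹ := by rw [zpow_neg, zpow_natCast]
    have e2 : v ^ (-(j:ℤ)) = (v ^ j)⁻¹ := by rw [zpow_neg, zpow_natCast]
    have hpow : (u * v) ^ p = (u ^ j * v ^ j) * (u * v) ^ (p - j) := by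
      rw [← mul_pow, ← pow_add]
      congr 1
      omega
    rw [e1, e2, hpow, ← mul_sub]
    have h1 : u ^ j ≠ 0 := pow_ne_zero _ hu
    have h2 : v ^ j ≠ 0 := pow_ne_zero _ hv
    have h3 : (u * v) ^ (p - j) ≠ 0 := pow_ne_zero _ huv
    field_simp
  have hDz : D.eval z = A.eval z * z ^ s - β * B.eval z := by
    rw [hDdef]
    simp [eval_mul, eval_pow, eval_X, eval_sub, eval_C]
  have hE : q u - q v - β * z ^ (-(s:ℤ)) = D.eval z / (z ^ s * B.eval z) := by
    rw [hqsub, hDz]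
    have hzs : z ^ s ≠ 0 := pow_ne_zero _ hz0'
    have e3 : z ^ (-(s:ℤ)) = (z ^ s)⁻¹ := by rw [zpow_neg, zpow_natCast]
    rw [e3]
    field_simp
  rw [hE]
  have habs : ‖D.eval z / (z ^ s * B.eval z)‖
      = ‖D.eval z‖ / (‖z‖ ^ s * ‖B.eval z‖) := by
    simp [map_div₀, map_mul, map_pow]
  have hrhs : ‖β * z ^ (-(s:ℤ))‖ = ‖β‖ * (‖z‖ ^ s)⁻¹ := by
    rw [norm_mul, norm_zpow, zpow_neg, zpow_natCast]
  rw [habs, hrhs]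
  have hDub := hDup z hz1
  have key : ‖D.eval z‖
      ≤ (C₁ / (c₃ * ‖β‖)) * ‖z‖ * ‖β‖
        * ‖B.eval z‖ := by
    calc ‖D.eval z‖ ≤ C₁ * ‖z‖ ^ (m+1) := hDub
      _ = (C₁ / (c₃ * ‖β‖)) * ‖z‖ * ‖β‖
          * (c₃ * ‖z‖ ^ m) := by
          field_simp
          ring
      _ ≤ (C₁ / (c₃ * ‖β‖)) * ‖z‖ * ‖β‖
          * ‖B.eval z‖ := by
          exact mul_le_mul_of_nonneg_left hBlb (by positivity)
  rw [div_le_iff₀ (by positivity : (0:ℝ) < ‖z‖ ^ s * ‖B.eval z‖)]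
  refine le_trans key (le_of_eq ?_)
  field_simp
end

section
/- Consider the linear system x²y' = M y + (x,x)ᵀ where M is the matrix with rows (0,1),(−1,0) plus μ·x·Id for μ>0. The homogeneous system x²y' = (M₀ + μx·Id)y with M₀ = [[0,1],[−1,0]] admits the explicit solution y(x) = x^μ (sin(1/x), cos(1/x))ᵀ for x>0, which tends to 0 as x→0⁺ but does not admit an asymptotic expansion in a power series at 0⁺ (indeed x^{−μ}y₁(x) = sin(1/x) has no limit as x→0⁺). -/
/-!
Writing `x_k = (π + kπ)⁻¹`, the first component `x ^ μ * sin (1/x)` vanishes along `x_k`, so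
every coefficient of a power expansion vanishes: if the first `n` do, dividing the order-`n`
estimate at `x_k` by `x_kⁿ` bounds `|cₙ|` by `C x_k → 0`. The function would then be
`O(x^(N+1))` for every `N`, whereas it equals `x ^ μ` along `(π/2 + 2kπ)⁻¹`.
-/

open Set Filter Real Topology Asymptotics Finset

theorem tendsto_rpow_nhds_zero_of_pos {a : ℝ} (ha : 0 < a) :
    Tendsto (fun x : ℝ => x ^ a) (𝓝 0) (𝓝 0) := by
  simpa [Real.zero_rpow ha.ne'] using (Real.continuousAt_rpow_const 0 a (Or.inr ha.le)).tendsto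

theorem isBigO_nhdsGT_zero_of_forall_Ioo {E : Type*} [NormedAddCommGroup E] {g : ℝ → E}
    {C δ : ℝ} {k : ℕ} (hδ : 0 < δ) (h : ∀ x ∈ Ioo 0 δ, ‖g x‖ ≤ C * x ^ k) :
    g =O[𝓝[>] 0] fun x => x ^ k :=
  IsBigO.of_bound C <| mem_of_superset (Ioo_mem_nhdsGT hδ) fun x hx => by
    simpa [abs_of_pos hx.1] using h x hx

def HasPowerExpansion {E : Type*} [NormedAddCommGroup E] [NormedSpace ℝ E]
    (f : ℝ → E) (c : ℕ → E) (l : Filter ℝ) : Prop :=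
  ∀ N : ℕ, (fun x => f x - ∑ n ∈ range (N + 1), x ^ n • c n) =O[l] fun x => x ^ (N + 1)

namespace HasPowerExpansion

variable {E F : Type*} [NormedAddCommGroup E] [NormedSpace ℝ E] [NormedAddCommGroup F]
  [NormedSpace ℝ F] {f : ℝ → E} {c : ℕ → E} {l l' : Filter ℝ}

theorem mono (hf : HasPowerExpansion f c l) (hl : l' ≤ l) : HasPowerExpansion f c l' :=
  fun N => (hf N).mono hl

theorem map (hf : HasPowerExpansion f c l) (L : E →L[ℝ] F) :
    HasPowerExpansion (fun x => L (f x)) (fun n => L (c n)) l := fun N =>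
  (L.isBigO_comp _ l).trans (hf N) |>.congr_left fun x => by simp [map_sub, map_sum, map_smul]

theorem coeff_eq_zero_of_eventuallyEq_zero [l.NeBot] (hl : l ≤ 𝓝[≠] 0)
    (hf : HasPowerExpansion f c l) (h0 : f =ᶠ[l] 0) (n : ℕ) : c n = 0 := by
  induction n using Nat.strong_induction_on with
  | _ n ih =>
    have hne : ∀ᶠ x in l, x ≠ 0 := hl self_mem_nhdsWithin
    have hlead : (fun x : ℝ => x ^ n • c n) =O[l] fun x => x ^ n * x := by
      refine ((hf n).neg_left.congr' ?_ (.of_eq (funext fun x => pow_succ x n)))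
      filter_upwards [h0] with x hx
      have hlow : ∑ m ∈ range n, x ^ m • c m = 0 :=
        sum_eq_zero fun m hm => by rw [ih m (mem_range.1 hm), smul_zero]
      simp [hx, sum_range_succ, hlow]
    have hc : (fun _ : ℝ => c n) =O[l] fun x => x := by
      refine ((isBigO_refl (fun x : ℝ => (x ^ n)⁻¹) l).smul hlead).congr' ?_ ?_ <;>
        filter_upwards [hne] with x hx
      · rw [smul_smul, inv_mul_cancel₀ (pow_ne_zero n hx), one_smul]
      · rw [smul_eq_mul, ← mul_assoc, inv_mul_cancel₀ (pow_ne_zero n hx), one_mul]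
    have hc0 := hc.trans_tendsto (tendsto_id.mono_left (hl.trans nhdsWithin_le_nhds))
    exact tendsto_nhds_unique tendsto_const_nhds hc0

end HasPowerExpansion

theorem not_rpow_isBigO_pow {l : Filter ℝ} [l.NeBot] (hl : l ≤ 𝓝[>] 0) {μ : ℝ} {k : ℕ}
    (hμk : μ < k) : ¬ (fun x : ℝ => x ^ μ) =O[l] fun x => x ^ k := by
  have hpos : ∀ᶠ x in l, 0 < x := hl self_mem_nhdsWithin
  have hsmall : (fun x : ℝ => x ^ k) =o[l] fun x => x ^ μ := by
    refine IsLittleO.congr' (f₁ := fun x : ℝ => x ^ (k - μ) * x ^ μ) ?_ ?_ .rfl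
    · refine (isLittleO_one_iff ℝ).2 ?_ |>.mul_isBigO (isBigO_refl _ l) |>.congr_right (by simp)
      exact (tendsto_rpow_nhds_zero_of_pos (sub_pos.2 hμk)).mono_left (hl.trans nhdsWithin_le_nhds)
    · filter_upwards [hpos] with x hx
      rw [← Real.rpow_add hx, sub_add_cancel, Real.rpow_natCast]
  intro hbig
  exact isLittleO_irrefl (hpos.mono fun x hx => (Real.rpow_pos_of_pos hx μ).ne').frequently
    (hbig.trans_isLittleO hsmall)

theorem tendsto_inv_add_nat_mul_nhdsGT_zero (a : ℝ) {b : ℝ} (hb : 0 < b) :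
    Tendsto (fun k : ℕ => (a + k * b)⁻¹) atTop (𝓝[>] 0) :=
  tendsto_inv_atTop_nhdsGT_zero.comp <|
    tendsto_atTop_add_const_left _ a (tendsto_natCast_atTop_atTop.atTop_mul_const hb)

theorem sin_one_div_inv_add_nat_mul_pi (k : ℕ) : sin (1 / (π + k * π)⁻¹) = 0 := by
  simp [sin_add_nat_mul_pi]

theorem sin_one_div_inv_add_nat_mul_two_pi (k : ℕ) :
    sin (1 / (π / 2 + k * (2 * π))⁻¹) = 1 := by
  simp [sin_add_nat_mul_two_pi]

theorem not_exists_tendsto_sin_one_div :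
    ¬ ∃ L : ℝ, Tendsto (fun x : ℝ => sin (1 / x)) (𝓝[>] 0) (𝓝 L) := by
  rintro ⟨L, hL⟩
  have h0 := hL.comp (tendsto_inv_add_nat_mul_nhdsGT_zero π pi_pos)
  have h1 := hL.comp (tendsto_inv_add_nat_mul_nhdsGT_zero (π / 2) two_pi_pos)
  simp only [Function.comp_def, sin_one_div_inv_add_nat_mul_pi,
    sin_one_div_inv_add_nat_mul_two_pi] at h0 h1
  exact zero_ne_one ((tendsto_const_nhds_iff.1 h0).trans (tendsto_const_nhds_iff.1 h1).symm)

theorem not_hasPowerExpansion_rpow_mul_sin_one_div (μ : ℝ) (c : ℕ → ℝ) :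
    ¬ HasPowerExpansion (fun x => x ^ μ * sin (1 / x)) c (𝓝[>] 0) := by
  intro hf
  have hA := tendsto_inv_add_nat_mul_nhdsGT_zero π pi_pos
  have hB := tendsto_inv_add_nat_mul_nhdsGT_zero (π / 2) two_pi_pos
  have hc : ∀ n, c n = 0 :=
    (hf.mono hA).coeff_eq_zero_of_eventuallyEq_zero (hA.trans (nhdsGT_le_nhdsNE 0))
      (eventually_map.2 (.of_forall fun k => by
        simp only [sin_one_div_inv_add_nat_mul_pi, mul_zero, Pi.zero_apply]))
  obtain ⟨N, hN⟩ := exists_nat_gt μ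
  refine not_rpow_isBigO_pow (k := N + 1) hB (by push_cast; linarith) ?_
  refine ((hf N).mono hB).congr' ?_ .rfl
  refine eventually_map.2 (.of_forall fun k => ?_)
  simp only [sin_one_div_inv_add_nat_mul_two_pi, hc, smul_zero, sum_const_zero, mul_one,
    sub_zero]

theorem HasDerivAt.rpow_mul_comp_inv {g : ℝ → ℝ} {g' x : ℝ} (μ : ℝ)
    (hg : HasDerivAt g g' x⁻¹) (hx : x ≠ 0) :
    HasDerivAt (fun t => t ^ μ * g t⁻¹)
      ((x ^ 2)⁻¹ * (μ * x * (x ^ μ * g x⁻¹) - x ^ μ * g')) x := by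
  refine ((Real.hasDerivAt_rpow_const (p := μ) (Or.inl hx)).mul
    (hg.comp x (hasDerivAt_inv hx))).congr_deriv ?_
  rw [Real.rpow_sub_one hx, Function.comp_apply]
  field_simp
  ring

noncomputable def oscillatingSolution (μ x : ℝ) : Fin 2 → ℝ :=
  fun i => x ^ μ * if i = 0 then sin (1 / x) else cos (1 / x)

theorem exists_hasDerivAt_oscillatingSolution (μ : ℝ) {x : ℝ} (hx : x ≠ 0) :
    ∃ d : Fin 2 → ℝ, HasDerivAt (oscillatingSolution μ) d x ∧
      x ^ 2 • d = (!![(0 : ℝ), -1; 1, 0] + (μ * x) • 1).mulVec (oscillatingSolution μ x) := by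
  have hsin := (hasDerivAt_sin x⁻¹).rpow_mul_comp_inv μ hx
  have hcos := (hasDerivAt_cos x⁻¹).rpow_mul_comp_inv μ hx
  refine ⟨(x ^ 2)⁻¹ • fun i => μ * x * oscillatingSolution μ x i -
    x ^ μ * if i = 0 then cos (1 / x) else -sin (1 / x), hasDerivAt_pi.2 fun i => ?_, ?_⟩
  · fin_cases i
    · simpa [oscillatingSolution] using hsin
    · simpa [oscillatingSolution] using hcos
  · rw [smul_inv_smul₀ (pow_ne_zero 2 hx)]
    ext i
    fin_cases i <;>
      simp [oscillatingSolution, Matrix.mulVec, dotProduct, sub_eq_add_neg, add_comm]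

theorem tendsto_oscillatingSolution {μ : ℝ} (hμ : 0 < μ) :
    Tendsto (oscillatingSolution μ) (𝓝[>] 0) (𝓝 0) := by
  refine tendsto_pi_nhds.2 fun i => ((tendsto_rpow_nhds_zero_of_pos hμ).mono_left
    nhdsWithin_le_nhds).zero_mul_isBoundedUnder_le (isBoundedUnder_of ⟨1, fun x => ?_⟩)
  dsimp only [Function.comp_apply]
  split_ifs
  exacts [abs_sin_le_one _, abs_cos_le_one _]

/-- For `μ > 0`, the function `y(x) = x^μ (sin(1/x), cos(1/x))ᵀ`
solves the homogeneous system `x² y' = (M₀ + μ x·Id) y` (with `M₀` the rotation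
matrix generating eigenvalues `±i`), tends to `0` as `x → 0⁺`, but does not admit an
asymptotic expansion in a power series at `0⁺` — indeed `x^{−μ} y₁(x) = sin(1/x)`
has no limit as `x → 0⁺`. -/
theorem stmt_18 (μ : ℝ) (hμ : 0 < μ)
    (y : ℝ → Fin 2 → ℝ)
    (hy : ∀ x : ℝ, 0 < x →
      y x = fun i => x ^ μ * (if i = 0 then Real.sin (1/x) else Real.cos (1/x))) :
    (∀ x : ℝ, 0 < x → ∃ d : Fin 2 → ℝ, HasDerivAt y d x ∧
      x ^ 2 • d = ((Matrix.of ![![(0:ℝ), -1], ![1, 0]]) + (μ * x) • (1 : Matrix (Fin 2) (Fin 2) ℝ)).mulVec (y x)) ∧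
    Filter.Tendsto y (nhdsWithin 0 (Ioi 0)) (nhds 0) ∧
    ¬ (∃ h : ℕ → Fin 2 → ℝ, ∀ N : ℕ, ∃ C δ : ℝ, 0 < C ∧ 0 < δ ∧
        ∀ x ∈ Ioo (0:ℝ) δ,
          ‖y x - ∑ n ∈ Finset.range (N+1), x ^ n • h n‖ ≤ C * x ^ (N+1)) ∧
    ¬ (∃ L : ℝ, Filter.Tendsto (fun x : ℝ => Real.sin (1/x))
        (nhdsWithin 0 (Ioi 0)) (nhds L)) := by
  have hy_nhds : ∀ x, 0 < x → y =ᶠ[𝓝 x] oscillatingSolution μ := fun x hx =>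
    eventually_of_mem (Ioi_mem_nhds hx) hy
  have hy_gt : y =ᶠ[𝓝[>] 0] oscillatingSolution μ := eventually_nhdsWithin_of_forall hy
  refine ⟨fun x hx => ?_, (tendsto_oscillatingSolution hμ).congr' hy_gt.symm, ?_,
    not_exists_tendsto_sin_one_div⟩
  · obtain ⟨d, hd, hode⟩ := exists_hasDerivAt_oscillatingSolution μ hx.ne'
    exact ⟨d, hd.congr_of_eventuallyEq (hy_nhds x hx), by rw [hy x hx]; exact hode⟩
  · rintro ⟨h, hexp⟩
    have hy_exp : HasPowerExpansion y h (𝓝[>] 0) := fun N => by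
      obtain ⟨C, δ, -, hδ, hC⟩ := hexp N
      exact isBigO_nhdsGT_zero_of_forall_Ioo hδ hC
    refine not_hasPowerExpansion_rpow_mul_sin_one_div μ (fun n => h n 0) fun N => ?_
    refine (hy_exp.map (ContinuousLinearMap.proj 0) N).congr' ?_ .rfl
    filter_upwards [hy_gt] with x hx
    simp [hx, oscillatingSolution]
end
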